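/- arXiv:math/0312001 — 10 statements merged into one kernel-verified Lean document; each statement's English description precedes it below -/
import Mathlib

section
/- Amalgamation of normed spaces: let A and (B_j)_{j∈J} be normed spaces over ℝ (or ℂ) and let φ_j : A → B_j be linear isometric embeddings for each j in an index set J. Then there exist a normed space C and linear isometric embeddings ψ_j : B_j → C such that ψ_j ∘ φ_j = ψ_k ∘ φ_k for all j, k ∈ J. -/
/-!
Take `C = ℓ¹(B) / W̄`, where `W` consists of the tuples `(φ_i u_i)_i` with `∑ u_i = 0`, and let
`ψ_j` be the inclusion of the `j`-th summand; `ψ_j ∘ φ_j = ψ_k ∘ φ_k` because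
`single j (φ_j v) - single k (φ_k v) ∈ W`. Each `ψ_j` is isometric: `∑ u_i = 0` gives
`‖u_j‖ ≤ ∑_{i ≠ j} ‖u_i‖`, so `‖single j b + (φ_i u_i)_i‖ = ‖b + φ_j u_j‖ + ∑_{i ≠ j} ‖u_i‖ ≥ ‖b‖`,
i.e. `single j b` has distance `‖b‖` from `W`, hence from its closure.
-/

universe u

open Metric

attribute [local instance] Submodule.isClosed_topologicalClosure

theorem Submodule.Quotient.norm_mk_eq_infDist {R M : Type*} [Ring R] [SeminormedAddCommGroup M]
    [Module R M] (S : Submodule R M) (m : M) :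
    ‖(Submodule.Quotient.mk m : M ⧸ S)‖ = infDist m S :=
  QuotientAddGroup.norm_mk m

theorem lp.sum_norm_le_norm {α : Type*} {E : α → Type*} [∀ i, NormedAddCommGroup (E i)]
    (f : lp E 1) (s : Finset α) : ∑ i ∈ s, ‖f i‖ ≤ ‖f‖ := by
  simpa using lp.sum_rpow_le_norm_rpow (by norm_num) f s

section Amalgamation

variable {𝕜 : Type*} [NormedField 𝕜] {J : Type*} [DecidableEq J]
  {A : Type*} [NormedAddCommGroup A] [NormedSpace 𝕜 A]
  {B : J → Type*} [∀ j, NormedAddCommGroup (B j)] [∀ j, NormedSpace 𝕜 (B j)]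
  (φ : ∀ j, A →ₗᵢ[𝕜] B j)

noncomputable def Amalgamation.ofFinsupp : (J →₀ A) →ₗ[𝕜] lp B 1 :=
  Finsupp.lsum 𝕜 fun i => lp.lsingle 1 i ∘ₗ (φ i).toLinearMap

noncomputable def Amalgamation.relations : Submodule 𝕜 (lp B 1) :=
  (LinearMap.ker (Finsupp.lsum 𝕜 fun _ => LinearMap.id : (J →₀ A) →ₗ[𝕜] A)).map (ofFinsupp φ)

abbrev Amalgamation : Type _ :=
  lp B 1 ⧸ (Amalgamation.relations φ).topologicalClosure

namespace Amalgamation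

theorem ofFinsupp_apply (u : J →₀ A) (i : J) : ofFinsupp φ u i = φ i (u i) := by
  simp only [ofFinsupp, Finsupp.lsum_apply, Finsupp.sum, LinearMap.coe_comp, Function.comp_apply,
    LinearIsometry.coe_toLinearMap, lp.coeFn_sum, Finset.sum_apply]
  change ∑ k ∈ u.support, Pi.single k (φ k (u k)) i = _
  rw [Finset.sum_pi_single]
  split_ifs with h
  · rfl
  · rw [Finsupp.notMem_support_iff.mp h, map_zero]

theorem single_sub_single_mem_relations (v : A) (j k : J) :
    lp.single 1 j (φ j v) - lp.single 1 k (φ k v) ∈ relations φ :=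
  ⟨Finsupp.single j v - Finsupp.single k v, by simp [map_sub], by simp [ofFinsupp, map_sub]⟩

theorem norm_le_norm_single_add {w : lp B 1} (hw : w ∈ relations φ) (j : J) (b : B j) :
    ‖b‖ ≤ ‖lp.single 1 j b + w‖ := by
  obtain ⟨u, hu, rfl⟩ := hw
  set x := lp.single 1 j b + ofFinsupp φ u
  set s := insert j u.support
  have hxj : x j = b + φ j (u j) := by simp [x, ofFinsupp_apply]
  have hx_ne : ∀ i ∈ s.erase j, ‖x i‖ = ‖u i‖ := fun i hi => by
    simp [x, ofFinsupp_apply, Pi.single_eq_of_ne (Finset.ne_of_mem_erase hi)]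
  have hu_sum : u j + ∑ i ∈ s.erase j, u i = 0 := by
    rw [Finset.add_sum_erase _ _ (Finset.mem_insert_self j _)]
    simpa [Finsupp.sum_of_support_subset u (Finset.subset_insert j _) (fun _ => id)] using hu
  calc ‖b‖ ≤ ‖x j‖ + ‖u j‖ := by
        simpa [hxj] using norm_sub_le (x j) (φ j (u j))
    _ ≤ ‖x j‖ + ∑ i ∈ s.erase j, ‖x i‖ := by
        rw [eq_neg_of_add_eq_zero_left hu_sum, norm_neg, Finset.sum_congr rfl hx_ne]
        gcongr
        exact norm_sum_le _ _
    _ = ∑ i ∈ s, ‖x i‖ := Finset.add_sum_erase s (fun i => ‖x i‖) (Finset.mem_insert_self j _)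
    _ ≤ ‖x‖ := lp.sum_norm_le_norm x s

theorem norm_mk_single (j : J) (b : B j) :
    ‖(Submodule.Quotient.mk (lp.single 1 j b) : Amalgamation φ)‖ = ‖b‖ := by
  refine le_antisymm ?_ ?_
  · simpa [lp.norm_single] using Submodule.Quotient.norm_mk_le _ (lp.single 1 j b)
  · calc ‖b‖ ≤ infDist (lp.single 1 j b) (relations φ : Set (lp B 1)) := by
          refine (le_infDist ⟨0, zero_mem _⟩).mpr fun w hw => ?_
          simpa [dist_eq_norm, sub_eq_add_neg] using norm_le_norm_single_add φ (neg_mem hw) j b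
      _ = ‖(Submodule.Quotient.mk (lp.single 1 j b) : Amalgamation φ)‖ := by
          rw [Submodule.Quotient.norm_mk_eq_infDist, Submodule.topologicalClosure_coe,
            infDist_closure]

noncomputable def incl (j : J) : B j →ₗᵢ[𝕜] Amalgamation φ where
  toLinearMap := (relations φ).topologicalClosure.mkQ ∘ₗ lp.lsingle 1 j
  norm_map' := norm_mk_single φ j

theorem incl_comp_eq (j k : J) : (incl φ j).comp (φ j) = (incl φ k).comp (φ k) := by
  ext v
  exact (Submodule.Quotient.eq _).mpr
    (Submodule.le_topologicalClosure _ (single_sub_single_mem_relations φ v j k))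

end Amalgamation

end Amalgamation

/-- Amalgamation of normed spaces: given linear isometric embeddings
`φ_j : A → B_j` of normed spaces over `𝕜` (`𝕜 = ℝ` or `ℂ`), there exist a normed
space `C` and linear isometric embeddings `ψ_j : B_j → C` with
`ψ_j ∘ φ_j = ψ_k ∘ φ_k` for all `j, k`. -/
theorem amalgamation_of_normed_spaces {𝕜 : Type} [RCLike 𝕜] {J : Type u}
    (A : Type u) [NormedAddCommGroup A] [NormedSpace 𝕜 A]
    (B : J → Type u) [∀ j, NormedAddCommGroup (B j)] [∀ j, NormedSpace 𝕜 (B j)]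
    (φ : ∀ j, A →ₗᵢ[𝕜] B j) :
    ∃ (C : Type u) (_ : NormedAddCommGroup C) (_ : NormedSpace 𝕜 C)
      (ψ : ∀ j, B j →ₗᵢ[𝕜] C),
      ∀ j k, (ψ j).comp (φ j) = (ψ k).comp (φ k) := by
  classical
  exact ⟨Amalgamation φ, inferInstance, inferInstance, Amalgamation.incl φ,
    Amalgamation.incl_comp_eq φ⟩
end

section
/- Almost amalgamation: let A and B be normed spaces, X a linear subspace of A, ε ≥ 0, and φ : X → B a linear map with (1−ε)‖x‖ ≤ ‖φ(x)‖ ≤ (1+ε)‖x‖ for all x ∈ X. Then there exist a normed space V and linear isometric embeddings h_A : A → V and h_B : B → V such that ‖h_A(x) − h_B(φ(x))‖ ≤ ε‖x‖ for all x ∈ X. -/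
universe u

/-!
Put on `A × B` the seminorm `‖(a, b)‖_* = inf_{x ∈ X} ‖a - x‖ + ‖b + φ x‖ + ε ‖x‖` and let `V` be
the quotient by its null space, with `h_A = [(·, 0)]` and `h_B = [(0, ·)]`. Taking `x = 0` gives
`‖(a, 0)‖_* ≤ ‖a‖` and `‖(0, b)‖_* ≤ ‖b‖`; the reverse inequalities are the triangle inequality
combined with `(1 - ε)‖x‖ ≤ ‖φ x‖`, respectively `‖φ x‖ ≤ (1 + ε)‖x‖`. Finally
`h_A x - h_B (φ x) = [(x, -φ x)]`, whose seminorm is at most `ε ‖x‖` by taking `x` itself.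
-/

open scoped NNReal

section AlmostAmalgamation

variable {𝕜 : Type*} [NormedField 𝕜] {A B : Type*}
  [SeminormedAddCommGroup A] [NormedSpace 𝕜 A] [SeminormedAddCommGroup B] [NormedSpace 𝕜 B]
  {X : Submodule 𝕜 A} (φ : X →ₗ[𝕜] B) (ε : ℝ≥0)

def almostAmalgamCost (v : A × B) (x : X) : ℝ :=
  ‖v.1 - x‖ + ‖v.2 + φ x‖ + ε * ‖x‖

variable {φ ε}

theorem almostAmalgamCost_nonneg (v : A × B) (x : X) : 0 ≤ almostAmalgamCost φ ε v x := by
  unfold almostAmalgamCost; positivity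

theorem almostAmalgamCost_add_le (v w : A × B) (x y : X) :
    almostAmalgamCost φ ε (v + w) (x + y) ≤
      almostAmalgamCost φ ε v x + almostAmalgamCost φ ε w y := by
  have hA : ‖(v + w).1 - ↑(x + y)‖ ≤ ‖v.1 - x‖ + ‖w.1 - y‖ := by
    simpa only [Prod.fst_add, Submodule.coe_add, add_sub_add_comm] using
      norm_add_le (v.1 - x) (w.1 - y)
  have hB : ‖(v + w).2 + φ (x + y)‖ ≤ ‖v.2 + φ x‖ + ‖w.2 + φ y‖ := by
    simpa only [Prod.snd_add, map_add, add_add_add_comm] using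
      norm_add_le (v.2 + φ x) (w.2 + φ y)
  have hX : (ε : ℝ) * ‖x + y‖ ≤ ε * ‖x‖ + ε * ‖y‖ := by
    rw [← mul_add]; gcongr; exact norm_add_le x y
  unfold almostAmalgamCost; linarith

theorem almostAmalgamCost_smul (c : 𝕜) (v : A × B) (x : X) :
    almostAmalgamCost φ ε (c • v) (c • x) = ‖c‖ * almostAmalgamCost φ ε v x := by
  simp only [almostAmalgamCost, Prod.smul_fst, Prod.smul_snd, map_smul, Submodule.coe_smul,
    ← smul_sub, ← smul_add, norm_smul]
  ring

theorem bddBelow_range_almostAmalgamCost (v : A × B) :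
    BddBelow (Set.range (almostAmalgamCost φ ε v)) :=
  ⟨0, Set.forall_mem_range.2 (almostAmalgamCost_nonneg v)⟩

variable (φ ε)

noncomputable def almostAmalgamSeminorm : Seminorm 𝕜 (A × B) :=
  .ofSMulLE (fun v => ⨅ x, almostAmalgamCost φ ε v x)
    (le_antisymm
      ((ciInf_le (bddBelow_range_almostAmalgamCost 0) 0).trans_eq
        (by simp [almostAmalgamCost]))
      (Real.iInf_nonneg (almostAmalgamCost_nonneg 0)))
    (fun v w => le_ciInf_add_ciInf fun x y =>
      (ciInf_le (bddBelow_range_almostAmalgamCost _) _).trans (almostAmalgamCost_add_le v w x y))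
    (fun c v => by
      rw [Real.mul_iInf_of_nonneg (norm_nonneg c)]
      exact le_ciInf fun x => (ciInf_le (bddBelow_range_almostAmalgamCost _) (c • x)).trans_eq
        (almostAmalgamCost_smul c v x))

variable {φ ε}

theorem almostAmalgamSeminorm_le_cost (v : A × B) (x : X) :
    almostAmalgamSeminorm φ ε v ≤ almostAmalgamCost φ ε v x :=
  ciInf_le (bddBelow_range_almostAmalgamCost v) x

theorem almostAmalgamSeminorm_inl (hlow : ∀ x : X, (1 - ε) * ‖x‖ ≤ ‖φ x‖) (a : A) :
    almostAmalgamSeminorm φ ε (a, 0) = ‖a‖ := by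
  refine le_antisymm ((almostAmalgamSeminorm_le_cost _ 0).trans_eq (by simp [almostAmalgamCost]))
    (le_ciInf fun x => ?_)
  have := norm_le_norm_sub_add a (x : A)
  have := hlow x
  simp only [almostAmalgamCost, zero_add]
  rw [Submodule.coe_norm] at *
  linarith

theorem almostAmalgamSeminorm_inr (hup : ∀ x : X, ‖φ x‖ ≤ (1 + ε) * ‖x‖) (b : B) :
    almostAmalgamSeminorm φ ε (0, b) = ‖b‖ := by
  refine le_antisymm ((almostAmalgamSeminorm_le_cost _ 0).trans_eq (by simp [almostAmalgamCost]))
    (le_ciInf fun x => ?_)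
  have := norm_sub_le (b + φ x) (φ x)
  rw [add_sub_cancel_right] at this
  have := hup x
  simp only [almostAmalgamCost, zero_sub, norm_neg, Submodule.coe_norm] at *
  linarith

theorem almostAmalgamSeminorm_graph_le (x : X) :
    almostAmalgamSeminorm φ ε ((x : A), -φ x) ≤ ε * ‖x‖ :=
  (almostAmalgamSeminorm_le_cost _ x).trans_eq (by simp [almostAmalgamCost])

def AlmostAmalgam (_φ : X →ₗ[𝕜] B) (_ε : ℝ≥0) : Type _ := A × B

namespace AlmostAmalgam

variable (φ ε)

instance : AddCommGroup (AlmostAmalgam φ ε) := inferInstanceAs (AddCommGroup (A × B))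

instance : Module 𝕜 (AlmostAmalgam φ ε) := inferInstanceAs (Module 𝕜 (A × B))

noncomputable instance : SeminormedAddCommGroup (AlmostAmalgam φ ε) :=
  AddGroupSeminorm.toSeminormedAddCommGroup (E := AlmostAmalgam φ ε)
    (almostAmalgamSeminorm φ ε).toAddGroupSeminorm

noncomputable instance : NormedSpace 𝕜 (AlmostAmalgam φ ε) :=
  ⟨fun c v => (map_smul_eq_mul (almostAmalgamSeminorm φ ε) c v).le⟩

noncomputable def mk : A × B →ₗ[𝕜] SeparationQuotient (AlmostAmalgam φ ε) :=
  (SeparationQuotient.mkCLM 𝕜 (AlmostAmalgam φ ε)).toLinearMap ∘ₗ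
    (LinearMap.id : A × B →ₗ[𝕜] AlmostAmalgam φ ε)

variable {φ ε}

theorem norm_mk (v : A × B) : ‖mk φ ε v‖ = almostAmalgamSeminorm φ ε v :=
  SeparationQuotient.norm_mk (E := AlmostAmalgam φ ε) v

noncomputable def inlₗᵢ (hlow : ∀ x : X, (1 - ε) * ‖x‖ ≤ ‖φ x‖) :
    A →ₗᵢ[𝕜] SeparationQuotient (AlmostAmalgam φ ε) :=
  ⟨mk φ ε ∘ₗ LinearMap.inl 𝕜 A B, fun a => (norm_mk _).trans (almostAmalgamSeminorm_inl hlow a)⟩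

noncomputable def inrₗᵢ (hup : ∀ x : X, ‖φ x‖ ≤ (1 + ε) * ‖x‖) :
    B →ₗᵢ[𝕜] SeparationQuotient (AlmostAmalgam φ ε) :=
  ⟨mk φ ε ∘ₗ LinearMap.inr 𝕜 A B, fun b => (norm_mk _).trans (almostAmalgamSeminorm_inr hup b)⟩

theorem norm_mk_inl_sub_mk_inr_le (x : X) :
    ‖mk φ ε ((x : A), 0) - mk φ ε (0, φ x)‖ ≤ ε * ‖x‖ := by
  rw [← map_sub, Prod.mk_sub_mk, sub_zero, zero_sub, norm_mk]
  exact almostAmalgamSeminorm_graph_le x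

end AlmostAmalgam

end AlmostAmalgamation

/-- Almost amalgamation: let `A`, `B` be normed spaces over `𝕜`
(`ℝ` or `ℂ`), `X` a linear subspace of `A`, `ε ≥ 0`, and `φ : X → B` linear with
`(1−ε)‖x‖ ≤ ‖φ(x)‖ ≤ (1+ε)‖x‖` on `X`. Then there are a normed space `V` and
linear isometric embeddings `h_A : A → V`, `h_B : B → V` with
`‖h_A x − h_B (φ x)‖ ≤ ε ‖x‖` for all `x ∈ X`. -/
theorem almost_amalgamation {𝕜 : Type} [RCLike 𝕜] {A B : Type u}
    [NormedAddCommGroup A] [NormedSpace 𝕜 A] [NormedAddCommGroup B] [NormedSpace 𝕜 B]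
    (X : Submodule 𝕜 A) (ε : ℝ) (hε : 0 ≤ ε) (φ : X →ₗ[𝕜] B)
    (hlow : ∀ x : X, (1 - ε) * ‖x‖ ≤ ‖φ x‖)
    (hup : ∀ x : X, ‖φ x‖ ≤ (1 + ε) * ‖x‖) :
    ∃ (V : Type u) (_ : NormedAddCommGroup V) (_ : NormedSpace 𝕜 V)
      (hA : A →ₗᵢ[𝕜] V) (hB : B →ₗᵢ[𝕜] V),
      ∀ x : X, ‖hA ↑x - hB (φ x)‖ ≤ ε * ‖x‖ := by
  lift ε to ℝ≥0 using hε
  exact ⟨SeparationQuotient (AlmostAmalgam φ ε), inferInstance, inferInstance,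
    AlmostAmalgam.inlₗᵢ hlow, AlmostAmalgam.inrₗᵢ hup, AlmostAmalgam.norm_mk_inl_sub_mk_inr_le⟩
end

section
/- Let X be a compact metric space and ε > 0, and let N = P(X, ε/2) be the packing number. If Y is a closed subset of X with Gromov–Hausdorff distance dist_GH(X, Y) < ε/(4N), then every point of X lies within distance ε of Y, i.e. the open ε-balls centered at points of Y cover X. -/
open Metric GromovHausdorff Set

/-- let `X` be a compact metric space, `ε > 0`, and `N = P(X, ε/2)` the
packing number (maximal cardinality of an `ε/2`-separated subset). If `Y ⊆ X` is a
closed (nonempty) subset with `dist_GH(X, Y) < ε/(4N)`, then the open `ε`-balls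
centered at points of `Y` cover `X`. -/
theorem balls_cover_of_ghDist_lt {X : Type*} [MetricSpace X] [CompactSpace X] [Nonempty X]
    (ε : ℝ) (hε : 0 < ε) (N : ℕ)
    (hN : IsGreatest {n : ℕ | ∃ s : Finset X, s.card = n ∧
      ∀ x ∈ s, ∀ y ∈ s, x ≠ y → ε / 2 < dist x y} N)
    (Y : Set X) (hYclosed : IsClosed Y) [Nonempty Y] [CompactSpace Y]
    (h : GromovHausdorff.ghDist X Y < ε / (4 * N)) :
    ∀ x : X, ∃ y ∈ Y, dist x y < ε := by
  classical
  intro x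
  by_contra hx
  push_neg at hx
  -- hx : ∀ y ∈ Y, ε ≤ dist x y
  have hN1 : 1 ≤ N := by
    refine hN.2 ⟨{Classical.arbitrary X}, Finset.card_singleton _, ?_⟩
    intro a ha b hb hab
    simp only [Finset.mem_singleton] at ha hb
    exact absurd (ha.trans hb.symm) hab
  have hNpos : (0 : ℝ) < N := by exact_mod_cast hN1
  set H : ℝ := ghDist X Y with hHdef
  have hH0 : 0 ≤ H := by rw [hHdef, ghDist]; exact dist_nonneg
  have h' : H * (4 * N) < ε := by
    rw [← lt_div_iff₀ (by positivity)]; exact h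
  let f : X → OptimalGHCoupling X Y := optimalGHInjl X Y
  let g : Y → OptimalGHCoupling X Y := optimalGHInjr X Y
  have hf : Isometry f := isometry_optimalGHInjl X Y
  have hg : Isometry g := isometry_optimalGHInjr X Y
  have hne : EMetric.hausdorffEdist (range f) (range g) ≠ ⊤ :=
    hausdorffEdist_ne_top_of_nonempty_of_bounded (range_nonempty _) (range_nonempty _)
      (isCompact_range hf.continuous).isBounded (isCompact_range hg.continuous).isBounded
  have hHd : hausdorffDist (range f) (range g) = H := hausdorffDist_optimal
  have key : ∀ a : X, ∃ y : Y, dist (f a) (g y) ≤ H := by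
    intro a
    obtain ⟨z, hz, hzeq⟩ := (isCompact_range hg.continuous).exists_infDist_eq_dist
      (range_nonempty _) (f a)
    obtain ⟨y, rfl⟩ := hz
    refine ⟨y, ?_⟩
    rw [← hzeq, ← hHd]
    exact infDist_le_hausdorffDist_of_mem (mem_range_self a) hne
  let F : X → Y := fun a => (key a).choose
  have hF : ∀ a : X, dist (f a) (g (F a)) ≤ H := fun a => (key a).choose_spec
  have hdist : ∀ a b : X, dist a b - 2 * H ≤ dist (F a : X) (F b : X) := by
    intro a b
    have e1 : dist (F a : X) (F b : X) = dist (g (F a)) (g (F b)) := by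
      rw [hg.dist_eq, Subtype.dist_eq]
    have e2 : dist a b = dist (f a) (f b) := (hf.dist_eq a b).symm
    have t4 := dist_triangle4 (f a) (g (F a)) (g (F b)) (f b)
    have h1 := hF a
    have h2 := hF b
    have h2' : dist (g (F b)) (f b) ≤ H := by rwa [dist_comm]
    linarith [e1, e2, t4, h1, h2']
  let seq : ℕ → X := fun n => (fun a => (F a : X))^[n] x
  have seq0 : seq 0 = x := rfl
  have seqS : ∀ n, seq (n + 1) = (F (seq n) : X) := by
    intro n
    simp only [seq, Function.iterate_succ_apply']
  have seqY : ∀ n, seq (n + 1) ∈ Y := by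
    intro n; rw [seqS]; exact (F (seq n)).2
  have main : ∀ i k : ℕ, ε - 2 * H * i ≤ dist (seq i) (seq (i + (k + 1))) := by
    intro i
    induction i with
    | zero =>
      intro k
      simp only [Nat.cast_zero, mul_zero, sub_zero, zero_add, seq0]
      exact hx _ (seqY k)
    | succ i ih =>
      intro k
      have : i + 1 + (k + 1) = (i + (k + 1)) + 1 := by omega
      rw [this, seqS, seqS]
      have := hdist (seq i) (seq (i + (k + 1)))
      have := ih k
      push_cast
      linarith
  have sep : ∀ i j : ℕ, i < j → j ≤ N → ε / 2 < dist (seq i) (seq j) := by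
    intro i j hij hjN
    have hiN : (i : ℝ) ≤ N := by exact_mod_cast le_of_lt (lt_of_lt_of_le hij hjN)
    obtain ⟨k, rfl⟩ : ∃ k, j = i + (k + 1) := ⟨j - i - 1, by omega⟩
    have h1 := main i k
    have h2 : 2 * H * (i : ℝ) ≤ 2 * H * (N : ℝ) := by nlinarith
    nlinarith
  have hinj : Set.InjOn seq (Finset.range (N + 1) : Finset ℕ) := by
    intro i hi j hj hij
    by_contra hne'
    rcases Nat.lt_or_ge i j with hlt | hge
    · have := sep i j hlt (by simpa using Nat.lt_succ_iff.mp (Finset.mem_range.mp hj))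
      rw [hij] at this
      simp at this
      linarith
    · have hlt : j < i := lt_of_le_of_ne hge (fun e => hne' e.symm)
      have := sep j i hlt (by simpa using Nat.lt_succ_iff.mp (Finset.mem_range.mp hi))
      rw [hij] at this
      simp at this
      linarith
  have hcard : ((Finset.range (N + 1)).image seq).card = N + 1 := by
    rw [Finset.card_image_of_injOn hinj, Finset.card_range]
  have : N + 1 ≤ N := by
    refine hN.2 ⟨(Finset.range (N + 1)).image seq, hcard, ?_⟩
    intro a ha b hb hab
    obtain ⟨i, hi, rfl⟩ := Finset.mem_image.mp ha
    obtain ⟨j, hj, rfl⟩ := Finset.mem_image.mp hb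
    have hijne : i ≠ j := fun e => hab (by rw [e])
    rcases Nat.lt_or_ge i j with hlt | hge
    · exact sep i j hlt (Nat.lt_succ_iff.mp (Finset.mem_range.mp hj))
    · have hlt : j < i := lt_of_le_of_ne hge (fun e => hijne e.symm)
      rw [dist_comm]
      exact sep j i hlt (Nat.lt_succ_iff.mp (Finset.mem_range.mp hi))
  omega
end

section
/- Let T be a locally compact Hausdorff topological space, t₀ ∈ T, and w : T → ℝ a nonnegative function that is lower semicontinuous at t₀. Then there exists a continuous nonnegative function w' : T → ℝ with w'(t₀) = w(t₀) and w'(t) ≤ w(t) for all t ∈ T. -/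
open Set Filter

private lemma geom_half_partial (N : ℕ) :
    ∑ i ∈ Finset.range N, ((2:ℝ)⁻¹) ^ (i + 1) = 1 - ((2:ℝ)⁻¹) ^ N := by
  induction N with
  | zero => simp
  | succ n ih =>
      rw [Finset.sum_range_succ, ih, pow_succ]
      ring

private lemma geom_half_tsum : ∑' n : ℕ, ((2:ℝ)⁻¹) ^ (n + 1) = 1 := by
  have h : ∑' n : ℕ, ((2:ℝ)⁻¹) ^ (n + 1) = ∑' n : ℕ, (2:ℝ)⁻¹ * ((2:ℝ)⁻¹) ^ n := by
    congr 1; ext n; rw [pow_succ]; ring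
  rw [h, tsum_mul_left, tsum_geometric_of_lt_one (by norm_num) (by norm_num)]
  norm_num

/-- on a locally compact Hausdorff space `T`, if a nonnegative function
`w : T → ℝ` is lower semicontinuous at `t₀`, then there is a continuous nonnegative
`w' : T → ℝ` with `w'(t₀) = w(t₀)` and `w' ≤ w` everywhere. -/
theorem exists_continuous_le_of_lowerSemicontinuousAt {T : Type*} [TopologicalSpace T]
    [LocallyCompactSpace T] [T2Space T] (t₀ : T) (w : T → ℝ)
    (hw : ∀ t, 0 ≤ w t) (hlsc : LowerSemicontinuousAt w t₀) :
    ∃ w' : T → ℝ, Continuous w' ∧ (∀ t, 0 ≤ w' t) ∧ w' t₀ = w t₀ ∧ ∀ t, w' t ≤ w t := by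
  rcases eq_or_lt_of_le (hw t₀) with h0 | ha
  · exact ⟨fun _ => 0, continuous_const, fun _ => le_rfl, h0, fun t => hw t⟩
  set a := w t₀ with ha_def
  -- thresholds
  set c : ℕ → ℝ := fun n => a * (1 - ((2:ℝ)⁻¹) ^ (n + 1)) with hc_def
  have hc_lt : ∀ n, c n < a := by
    intro n
    have h : (0:ℝ) < ((2:ℝ)⁻¹) ^ (n + 1) := by positivity
    show a * (1 - ((2:ℝ)⁻¹) ^ (n + 1)) < a
    nlinarith
  -- neighborhoods
  set S : ℕ → Set T := fun n => {t | ∀ k ≤ n, c k < w t} with hS_def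
  have hS_nhds : ∀ n, S n ∈ nhds t₀ := by
    intro n
    have h : ∀ᶠ t in nhds t₀, ∀ k ∈ Set.Iic n, c k < w t :=
      (eventually_all_finite (Set.finite_Iic n)).2 fun k _ => hlsc (c k) (hc_lt k)
    exact h.mono fun t ht k hk => ht k hk
  have hS_anti : ∀ m n, m ≤ n → S n ⊆ S m := by
    intro m n hmn t ht k hk
    exact ht k (hk.trans hmn)
  -- bump functions
  have hf : ∀ n : ℕ, ∃ f : C(T, ℝ), f t₀ = 1 ∧ (∀ t, t ∉ S n → f t = 0) ∧
      ∀ t, f t ∈ Icc (0:ℝ) 1 := by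
    intro n
    have hdis : Disjoint ({t₀} : Set T) (interior (S n))ᶜ := by
      simp [disjoint_compl_right_iff_subset, Set.singleton_subset_iff,
        mem_interior_iff_mem_nhds, hS_nhds n]
    obtain ⟨f, hf1, hf0, -, hf01⟩ :=
      exists_continuous_one_zero_of_isCompact isCompact_singleton
        isOpen_interior.isClosed_compl hdis
    refine ⟨f, hf1 rfl, fun t ht => hf0 ?_, hf01⟩
    simp only [Set.mem_compl_iff]
    exact fun h => ht (interior_subset h)
  choose f hf1 hf0 hf01 using hf
  -- the function
  set F : ℕ → T → ℝ := fun n t => ((2:ℝ)⁻¹) ^ (n + 1) * f n t with hF_def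
  have hF_bd : ∀ n t, ‖F n t‖ ≤ ((2:ℝ)⁻¹) ^ (n + 1) := by
    intro n t
    have h1 := (hf01 n t).1
    have h2 := (hf01 n t).2
    simp only [hF_def, Real.norm_eq_abs]
    rw [abs_mul, abs_of_nonneg (by positivity), abs_of_nonneg h1]
    nlinarith [pow_pos (by norm_num : (0:ℝ) < 2⁻¹) (n + 1)]
  have hsum_geom : Summable fun n : ℕ => ((2:ℝ)⁻¹) ^ (n + 1) :=
    (summable_geometric_of_lt_one (by norm_num) (by norm_num)).comp_injective
      (add_left_injective 1)
  have hF_nonneg : ∀ n t, 0 ≤ F n t := by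
    intro n t
    exact mul_nonneg (by positivity) (hf01 n t).1
  have hF_summable : ∀ t, Summable fun n => F n t := fun t =>
    Summable.of_nonneg_of_le (fun n => hF_nonneg n t)
      (fun n => (le_abs_self _).trans (hF_bd n t)) hsum_geom
  refine ⟨fun t => a * ∑' n, F n t, ?_, ?_, ?_, ?_⟩
  · exact continuous_const.mul
      (continuous_tsum (fun n => continuous_const.mul (f n).continuous) hsum_geom
        fun n t => hF_bd n t)
  · intro t
    exact mul_nonneg ha.le (tsum_nonneg fun n => hF_nonneg n t)
  · have : ∀ n, F n t₀ = ((2:ℝ)⁻¹) ^ (n + 1) := by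
      intro n; simp [hF_def, hf1 n]
    simp only [this, geom_half_tsum, mul_one, ha_def]
  · intro t
    by_cases hall : ∀ n, t ∈ S n
    · -- w t ≥ a
      have hwt : a ≤ w t := by
        by_contra hlt
        push_neg at hlt
        obtain ⟨n, hn⟩ : ∃ n : ℕ, ((2:ℝ)⁻¹) ^ n < (a - w t) / a := by
          refine exists_pow_lt_of_lt_one ?_ (by norm_num)
          exact div_pos (by linarith) ha
        have h1 : c n < w t := hall n n le_rfl
        have hp : (0:ℝ) < ((2:ℝ)⁻¹) ^ n := by positivity
        have h2 : ((2:ℝ)⁻¹) ^ (n + 1) ≤ ((2:ℝ)⁻¹) ^ n := by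
          rw [pow_succ]; nlinarith
        rw [lt_div_iff₀ ha] at hn
        have h1' : a * (1 - ((2:ℝ)⁻¹) ^ (n + 1)) < w t := h1
        nlinarith
      calc a * ∑' n, F n t ≤ a * ∑' n : ℕ, ((2:ℝ)⁻¹) ^ (n + 1) := by
            apply mul_le_mul_of_nonneg_left _ ha.le
            exact Summable.tsum_le_tsum (fun n => (le_abs_self _).trans (hF_bd n t))
              (hF_summable t) hsum_geom
        _ = a := by rw [geom_half_tsum, mul_one]
        _ ≤ w t := hwt
    · push_neg at hall
      set N := Nat.find hall with hN_def
      have hFzero : ∀ n ∉ Finset.range N, F n t = 0 := by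
        intro n hn
        simp only [Finset.mem_range, not_lt] at hn
        have : t ∉ S n := fun h => Nat.find_spec hall (hS_anti N n hn h)
        simp [hF_def, hf0 n t this]
      have htsum : ∑' n, F n t = ∑ n ∈ Finset.range N, F n t := tsum_eq_sum hFzero
      have hsum_le : ∑ n ∈ Finset.range N, F n t ≤ 1 - ((2:ℝ)⁻¹) ^ N := by
        rw [← geom_half_partial N]
        apply Finset.sum_le_sum
        intro i _
        exact (le_abs_self _).trans (hF_bd i t)
      show a * ∑' n, F n t ≤ w t
      rcases Nat.eq_zero_or_pos N with hN0 | hNpos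
      · rw [htsum, hN0]
        simpa using hw t
      · obtain ⟨m, hm⟩ := Nat.exists_eq_succ_of_ne_zero hNpos.ne'
        have htm : t ∈ S m := by
          by_contra h
          have h2 : Nat.find hall ≤ m := Nat.find_le h
          rw [← hN_def] at h2
          omega
        have hcw : c m < w t := htm m le_rfl
        have : a * ∑' n, F n t ≤ a * (1 - ((2:ℝ)⁻¹) ^ N) := by
          rw [htsum]
          exact mul_le_mul_of_nonneg_left hsum_le ha.le
        have hceq : c m = a * (1 - ((2:ℝ)⁻¹) ^ N) := by
          show a * (1 - ((2:ℝ)⁻¹) ^ (m + 1)) = a * (1 - ((2:ℝ)⁻¹) ^ N)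
          rw [hm]
        rw [hceq] at hcw
        linarith
end

section
/- Let G be a compact group acting continuously and isometrically on a Banach space V̄ via α, and fix a length function ℓ on G. Define L(v) = sup { ‖α_x(v) − v‖ / ℓ(x) : x ∈ G, x ≠ e }. Then V := { v ∈ V̄ : L(v) < ∞ } is a dense linear subspace of V̄. -/
/-!
Average `v` against the bump `ψ = max (1 - ℓ/δ) 0` over Haar measure:
`w = (∫ ψ)⁻¹ • ∫ ψ(x) • α_x v dx`. Left invariance of Haar measure turns `α_y w - w` into
`(∫ ψ)⁻¹ • ∫ (ψ(y⁻¹x) - ψ(x)) • α_x v dx`, and subadditivity of `ℓ` makes `ψ` Lipschitz for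
left translation, `|ψ(y⁻¹x) - ψ(x)| ≤ ℓ(y)/δ`; so `w` is Lipschitz. On the other hand `ψ`
vanishes off `{ℓ < δ}`, and by compactness of `G` small length forces `α_x v` close to `v`,
so `w` is close to `v`.
-/

open MeasureTheory Set Filter Topology

section LipschitzSubmodule

variable {G 𝕜 V : Type*} [Group G] [NormedField 𝕜] [SeminormedAddCommGroup V] [NormedSpace 𝕜 V]

def lipschitzSubmodule (α : G → V ≃ₗᵢ[𝕜] V) (ℓ : G → ℝ) : Submodule 𝕜 V where
  carrier := {v | ∃ C, ∀ x, x ≠ 1 → ‖α x v - v‖ ≤ C * ℓ x}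
  zero_mem' := ⟨0, fun x _ => by simp⟩
  add_mem' := by
    rintro v w ⟨C, hC⟩ ⟨D, hD⟩
    refine ⟨C + D, fun x hx => ?_⟩
    calc ‖α x (v + w) - (v + w)‖ = ‖(α x v - v) + (α x w - w)‖ := by
          rw [map_add, add_sub_add_comm]
      _ ≤ C * ℓ x + D * ℓ x := (norm_add_le _ _).trans (add_le_add (hC x hx) (hD x hx))
      _ = (C + D) * ℓ x := (add_mul _ _ _).symm
  smul_mem' := by
    rintro c v ⟨C, hC⟩
    refine ⟨‖c‖ * C, fun x hx => ?_⟩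
    rw [map_smul, ← smul_sub, norm_smul, mul_assoc]
    exact mul_le_mul_of_nonneg_left (hC x hx) (norm_nonneg c)

theorem coe_lipschitzSubmodule (α : G → V ≃ₗᵢ[𝕜] V) {ℓ : G → ℝ}
    (hℓ : ∀ x, x ≠ 1 → 0 < ℓ x) :
    (lipschitzSubmodule α ℓ : Set V) =
      {v | BddAbove {r : ℝ | ∃ x : G, x ≠ 1 ∧ r = ‖α x v - v‖ / ℓ x}} := by
  ext v
  refine exists_congr fun C => ?_
  simp only [mem_upperBounds, mem_ofPred_eq, forall_exists_index, and_imp]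
  exact ⟨fun h r x hx hr => hr ▸ (div_le_iff₀ (hℓ x hx)).2 (h x hx),
    fun h x hx => (div_le_iff₀ (hℓ x hx)).1 (h _ x hx rfl)⟩

end LipschitzSubmodule

section LengthFunction

variable {G : Type*} {ℓ : G → ℝ}

noncomputable def lengthBump (ℓ : G → ℝ) (δ : ℝ) (x : G) : ℝ := max (1 - ℓ x / δ) 0

theorem lengthBump_nonneg (ℓ : G → ℝ) (δ : ℝ) : 0 ≤ lengthBump ℓ δ :=
  fun _ => le_max_right _ _

theorem lengthBump_pos_iff {δ : ℝ} (hδ : 0 < δ) {x : G} : 0 < lengthBump ℓ δ x ↔ ℓ x < δ := by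
  simp [lengthBump, div_lt_one hδ]

theorem continuous_lengthBump [TopologicalSpace G] (hℓ : Continuous ℓ) (δ : ℝ) :
    Continuous (lengthBump ℓ δ) :=
  (continuous_const.sub (hℓ.div_const δ)).max continuous_const

variable [Group G]

theorem length_nonneg (hsub : ∀ x y, ℓ (x * y) ≤ ℓ x + ℓ y) (hsymm : ∀ x, ℓ x⁻¹ = ℓ x)
    (hone : ℓ 1 = 0) (x : G) : 0 ≤ ℓ x := by
  have := hsub x x⁻¹
  rw [mul_inv_cancel, hone, hsymm] at this
  linarith

theorem length_pos_of_ne_one (hsub : ∀ x y, ℓ (x * y) ≤ ℓ x + ℓ y) (hsymm : ∀ x, ℓ x⁻¹ = ℓ x)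
    (hzero : ∀ x, ℓ x = 0 ↔ x = 1) {x : G} (hx : x ≠ 1) : 0 < ℓ x :=
  (length_nonneg hsub hsymm ((hzero 1).2 rfl) x).lt_of_ne' (mt (hzero x).1 hx)

theorem abs_length_inv_mul_sub_le (hsub : ∀ x y, ℓ (x * y) ≤ ℓ x + ℓ y)
    (hsymm : ∀ x, ℓ x⁻¹ = ℓ x) (x y : G) : |ℓ (y⁻¹ * x) - ℓ x| ≤ ℓ y := by
  have h₁ := hsub y⁻¹ x
  have h₂ := hsub y (y⁻¹ * x)
  rw [hsymm] at h₁
  rw [mul_inv_cancel_left] at h₂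
  exact abs_sub_le_iff.2 ⟨by linarith, by linarith⟩

theorem abs_lengthBump_inv_mul_sub_le (hsub : ∀ x y, ℓ (x * y) ≤ ℓ x + ℓ y)
    (hsymm : ∀ x, ℓ x⁻¹ = ℓ x) {δ : ℝ} (hδ : 0 < δ) (x y : G) :
    |lengthBump ℓ δ (y⁻¹ * x) - lengthBump ℓ δ x| ≤ δ⁻¹ * ℓ y :=
  calc |lengthBump ℓ δ (y⁻¹ * x) - lengthBump ℓ δ x|
      ≤ |(1 - ℓ (y⁻¹ * x) / δ) - (1 - ℓ x / δ)| := abs_max_sub_max_le_abs _ _ _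
    _ = δ⁻¹ * |ℓ (y⁻¹ * x) - ℓ x| := by
        rw [show (1 - ℓ (y⁻¹ * x) / δ) - (1 - ℓ x / δ) = -(δ⁻¹ * (ℓ (y⁻¹ * x) - ℓ x)) by ring,
          abs_neg, abs_mul, abs_of_pos (inv_pos.2 hδ)]
    _ ≤ δ⁻¹ * ℓ y := by gcongr; exact abs_length_inv_mul_sub_le hsub hsymm x y

end LengthFunction

theorem exists_pos_forall_lt_mem_of_mem_nhds {X : Type*} [TopologicalSpace X] [CompactSpace X]
    {f : X → ℝ} (hf : Continuous f) {a : X} (hpos : ∀ x, x ≠ a → 0 < f x) {U : Set X}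
    (hU : U ∈ 𝓝 a) : ∃ δ > 0, ∀ x, f x < δ → x ∈ U := by
  have hK : ∀ x ∈ (interior U)ᶜ, 0 < f x := fun x hx =>
    hpos x fun h => hx (h ▸ mem_interior_iff_mem_nhds.2 hU)
  obtain ⟨δ, hδ, hδK⟩ :=
    isOpen_interior.isClosed_compl.isCompact.exists_forall_le' hf.continuousOn hK
  refine ⟨δ, hδ, fun x hx => interior_subset ?_⟩
  by_contra hxU
  exact (hδK x hxU).not_gt hx

theorem norm_inv_integral_smul_integral_sub_le {X E : Type*} [MeasurableSpace X] {μ : Measure X}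
    [NormedAddCommGroup E] [NormedSpace ℝ E] [CompleteSpace E] {ψ : X → ℝ} {f : X → E} {v : E}
    {ε : ℝ}
    (hψ : Integrable ψ μ) (hψf : Integrable (fun x => ψ x • f x) μ) (hψ₀ : 0 ≤ ψ)
    (hc : 0 < ∫ x, ψ x ∂μ) (hf : ∀ x, ψ x ≠ 0 → ‖f x - v‖ ≤ ε) :
    ‖(∫ x, ψ x ∂μ)⁻¹ • ∫ x, ψ x • f x ∂μ - v‖ ≤ ε := by
  set c := ∫ x, ψ x ∂μ
  have hbound : ‖∫ x, ψ x • (f x - v) ∂μ‖ ≤ c * ε := by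
    calc _ ≤ ∫ x, ψ x * ε ∂μ :=
          norm_integral_le_of_norm_le (hψ.mul_const ε) (Eventually.of_forall fun x => ?_)
      _ = c * ε := integral_mul_const ε ψ
    rw [norm_smul, Real.norm_of_nonneg (hψ₀ x)]
    rcases eq_or_ne (ψ x) 0 with h | h
    · simp [h]
    · exact mul_le_mul_of_nonneg_left (hf x h) (hψ₀ x)
  have hdiff : c⁻¹ • (∫ x, ψ x • f x ∂μ) - v = c⁻¹ • ∫ x, ψ x • (f x - v) ∂μ := by
    simp_rw [smul_sub]
    rw [integral_sub hψf (hψ.smul_const v), integral_smul_const, smul_sub, inv_smul_smul₀ hc.ne']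
  rw [hdiff, norm_smul, Real.norm_of_nonneg (inv_nonneg.2 hc.le)]
  calc c⁻¹ * ‖∫ x, ψ x • (f x - v) ∂μ‖ ≤ c⁻¹ * (c * ε) := by gcongr
    _ = ε := inv_mul_cancel_left₀ hc.ne' ε

section Averaging

variable {G V : Type*} [Group G] [NormedAddCommGroup V] [NormedSpace ℝ V] [CompleteSpace V]

theorem map_integral_smul_orbit [MeasurableSpace G] [MeasurableMul G] (μ : Measure G)
    [μ.IsMulLeftInvariant] (α : G →* (V ≃ₗᵢ[ℝ] V)) (ψ : G → ℝ) (v : V) (y : G) :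
    α y (∫ x, ψ x • α x v ∂μ) = ∫ x, ψ (y⁻¹ * x) • α x v ∂μ :=
  calc α y (∫ x, ψ x • α x v ∂μ) = ∫ x, α y (ψ x • α x v) ∂μ :=
        ((α y).toLinearIsometry.integral_comp_comm _).symm
    _ = ∫ x, ψ (y⁻¹ * (y * x)) • α (y * x) v ∂μ := by simp [map_mul]
    _ = ∫ x, ψ (y⁻¹ * x) • α x v ∂μ := integral_mul_left_eq_self (fun x => ψ (y⁻¹ * x) • α x v) y

theorem integral_smul_orbit_mem_lipschitzSubmodule [TopologicalSpace G] [IsTopologicalGroup G]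
    [CompactSpace G] [MeasurableSpace G] [BorelSpace G] (μ : Measure G) [μ.IsMulLeftInvariant]
    [IsFiniteMeasure μ] (α : G →* (V ≃ₗᵢ[ℝ] V)) (hα : ∀ v : V, Continuous fun x : G => α x v)
    {ℓ ψ : G → ℝ} (hψ : Continuous ψ) {L : ℝ} (hψL : ∀ x y, |ψ (y⁻¹ * x) - ψ x| ≤ L * ℓ y)
    (v : V) : ∫ x, ψ x • α x v ∂μ ∈ lipschitzSubmodule (⇑α) ℓ := by
  have hint : ∀ f : G → ℝ, Continuous f → Integrable (fun x => f x • α x v) μ := fun f hf =>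
    (hf.smul (hα v)).integrable_of_hasCompactSupport (.of_compactSpace _)
  refine ⟨L * ‖v‖ * μ.real univ, fun y _ => ?_⟩
  rw [map_integral_smul_orbit,
    ← integral_sub (hint (fun x => ψ (y⁻¹ * x)) (hψ.comp (continuous_const_mul y⁻¹))) (hint ψ hψ)]
  simp_rw [← sub_smul]
  calc _ ≤ L * ℓ y * ‖v‖ * μ.real univ :=
        norm_integral_le_of_norm_le_const (Eventually.of_forall fun x => ?_)
    _ = L * ‖v‖ * μ.real univ * ℓ y := by ring
  rw [norm_smul, Real.norm_eq_abs, LinearIsometryEquiv.norm_map]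
  exact mul_le_mul_of_nonneg_right (hψL x y) (norm_nonneg v)

end Averaging

theorem dense_lipschitzSubmodule {G : Type*} [Group G] [TopologicalSpace G]
    [IsTopologicalGroup G] [CompactSpace G] {V : Type*} [NormedAddCommGroup V] [NormedSpace ℝ V]
    [CompleteSpace V] (α : G →* (V ≃ₗᵢ[ℝ] V)) (hα : ∀ v : V, Continuous fun x : G => α x v)
    {ℓ : G → ℝ} (hℓc : Continuous ℓ) (hℓsub : ∀ x y, ℓ (x * y) ≤ ℓ x + ℓ y)
    (hℓsymm : ∀ x, ℓ x⁻¹ = ℓ x) (hℓzero : ∀ x, ℓ x = 0 ↔ x = 1) :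
    Dense (lipschitzSubmodule (⇑α) ℓ : Set V) := by
  borelize G
  refine Metric.dense_iff.2 fun v ε hε => ?_
  have hnear : {x : G | ‖α x v - v‖ < ε / 2} ∈ 𝓝 1 := by
    have hv : Tendsto (fun x : G => α x v) (𝓝 1) (𝓝 v) := by simpa using (hα v).tendsto 1
    simpa [preimage, Metric.ball, dist_eq_norm] using hv (Metric.ball_mem_nhds v (half_pos hε))
  obtain ⟨δ, hδ, hδnear⟩ := exists_pos_forall_lt_mem_of_mem_nhds hℓc
    (fun x hx => length_pos_of_ne_one hℓsub hℓsymm hℓzero hx) hnear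
  let μ : Measure G := Measure.haar
  set ψ := lengthBump ℓ δ
  have hψc : Continuous ψ := continuous_lengthBump hℓc δ
  have hψ₀ : 0 ≤ ψ := lengthBump_nonneg ℓ δ
  have hψone : ψ 1 ≠ 0 := ((lengthBump_pos_iff hδ).2 (by rwa [(hℓzero 1).2 rfl])).ne'
  have hc : 0 < ∫ x, ψ x ∂μ :=
    hψc.integral_pos_of_hasCompactSupport_nonneg_nonzero (.of_compactSpace ψ) hψ₀ hψone
  have hψnear : ∀ x, ψ x ≠ 0 → ‖α x v - v‖ ≤ ε / 2 := fun x hx =>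
    (hδnear x ((lengthBump_pos_iff hδ).1 ((hψ₀ x).lt_of_ne' hx))).le
  refine ⟨(∫ x, ψ x ∂μ)⁻¹ • ∫ x, ψ x • α x v ∂μ, ?_, ?_⟩
  · rw [Metric.mem_ball, dist_eq_norm]
    refine (norm_inv_integral_smul_integral_sub_le ?_ ?_ hψ₀ hc hψnear).trans_lt (half_lt_self hε)
    · exact hψc.integrable_of_hasCompactSupport (.of_compactSpace ψ)
    · exact (hψc.smul (hα v)).integrable_of_hasCompactSupport (.of_compactSpace _)
  · exact Submodule.smul_mem _ _ (integral_smul_orbit_mem_lipschitzSubmodule μ α hα hψc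
      (abs_lengthBump_inv_mul_sub_le hℓsub hℓsymm hδ) v)

theorem lipschitz_elements_dense_general {G : Type*} [Group G] [TopologicalSpace G]
    [IsTopologicalGroup G] [CompactSpace G]
    {V : Type*} [NormedAddCommGroup V] [NormedSpace ℝ V] [CompleteSpace V]
    (α : G →* (V ≃ₗᵢ[ℝ] V)) (hα : ∀ v : V, Continuous fun x : G => α x v)
    (ℓ : G → ℝ) (hℓc : Continuous ℓ) (hℓsub : ∀ x y, ℓ (x * y) ≤ ℓ x + ℓ y)
    (hℓsymm : ∀ x, ℓ x⁻¹ = ℓ x) (hℓzero : ∀ x, ℓ x = 0 ↔ x = 1) :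
    ∃ W : Submodule ℝ V,
      (W : Set V) = {v : V | BddAbove {r : ℝ | ∃ x : G, x ≠ 1 ∧ r = ‖α x v - v‖ / ℓ x}} ∧
      Dense (W : Set V) :=
  ⟨lipschitzSubmodule (⇑α) ℓ,
    coe_lipschitzSubmodule _ fun _ hx => length_pos_of_ne_one hℓsub hℓsymm hℓzero hx,
    dense_lipschitzSubmodule α hα hℓc hℓsub hℓsymm hℓzero⟩

/-- let `G` be a compact group acting continuously and isometrically on
a Banach space `V̄` via `α`, with a length function `ℓ` on `G`. With
`L(v) = sup { ‖α_x(v) − v‖ / ℓ(x) : x ≠ e }`, the set `{v : L(v) < ∞}` is a dense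
linear subspace of `V̄`. -/
theorem lipschitz_elements_dense {G : Type*} [Group G] [TopologicalSpace G]
    [IsTopologicalGroup G] [CompactSpace G] [T2Space G]
    {V : Type*} [NormedAddCommGroup V] [NormedSpace ℝ V] [CompleteSpace V]
    (α : G →* (V ≃ₗᵢ[ℝ] V)) (hα : ∀ v : V, Continuous fun x : G => α x v)
    (ℓ : G → ℝ) (hℓc : Continuous ℓ) (hℓsub : ∀ x y, ℓ (x * y) ≤ ℓ x + ℓ y)
    (hℓsymm : ∀ x, ℓ x⁻¹ = ℓ x) (hℓzero : ∀ x, ℓ x = 0 ↔ x = 1) :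
    ∃ W : Submodule ℝ V,
      (W : Set V) = {v : V | BddAbove {r : ℝ | ∃ x : G, x ≠ 1 ∧ r = ‖α x v - v‖ / ℓ x}} ∧
      Dense (W : Set V) :=
  lipschitz_elements_dense_general α hα ℓ hℓc hℓsub hℓsymm hℓzero
end

section
/- Let (A, e) be an order-unit space with a Lipschitz seminorm L that is a closed Lip-norm, and let r_A denote the radius of the state space S(A) with metric ρ_L(μ,ν) = sup{|μ(a)−ν(a)| : L(a) ≤ 1}. Then for any R ≥ r_A, the unit ball of L decomposes as { a ∈ A : L(a) ≤ 1 } = ℝe + { a ∈ A : L(a) ≤ 1, ‖a‖ ≤ R }. -/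
variable {A : Type*} [NormedAddCommGroup A] [NormedSpace ℝ A]

/-- The state space of `(A, e)`: functionals with `μ(e) = ‖μ‖ = 1`. -/
def states (e : A) : Set (A →L[ℝ] ℝ) := {μ | μ e = 1 ∧ ‖μ‖ = 1}

/-- The metric `ρ_L(μ,ν) = sup { |μ(a) − ν(a)| : L(a) ≤ 1 }` on the state space. -/
noncomputable def stateDist (L : A → ℝ) (μ ν : A →L[ℝ] ℝ) : ℝ :=
  sSup {s : ℝ | ∃ a : A, L a ≤ 1 ∧ s = |μ a - ν a|}

open Filter Set Topology TopologicalSpace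

/-!
An unbounded supremum is read as `0`, so the first step is to show that the set defining
`ρ_L(μ, ν)` is bounded for states `μ, ν`. If it were not, every state would be at finite distance
from at most one point of the segment `[μ, ν]`; each `ρ_L`-ball would contain all but at most one
point of the segment, and each nonempty set open for the topology generated by the balls all but
finitely many. That topology would then not be Hausdorff, whereas the weak-* topology is.

The state space is weak-* compact (Banach–Alaoglu), hence `ρ_L`-bounded, and `ρ_L ≤ 2R` on it.
For `L b ≤ 1` the values `μ b` over states then fill an interval of length at most `2R`;
subtracting its midpoint times `e` leaves `L b` unchanged and, by Kadison's formula for the norm,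
gives norm at most `R`.
-/

section GenerateFrom

variable {X ι : Type*} {S : Set (Set X)} {z : ι → X}

theorem eventually_cofinite_mem_of_isOpen_generateFrom
    (hS : ∀ s ∈ S, ∀ᶠ i in cofinite, z i ∈ s) {O : Set X} (hO : IsOpen[generateFrom S] O)
    (hne : O.Nonempty) : ∀ᶠ i in cofinite, z i ∈ O := by
  induction hO with
  | basic s hs => exact hS s hs
  | univ => exact Eventually.of_forall fun _ => trivial
  | inter s t _ _ ihs iht =>
    exact (ihs (hne.mono inter_subset_left)).and (iht (hne.mono inter_subset_right))
  | sUnion F _ ih =>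
    obtain ⟨x, s, hs, hx⟩ := hne
    exact (ih s hs ⟨x, hx⟩).mono fun i hi => ⟨s, hs, hi⟩

theorem subsingleton_of_t2Space_generateFrom [Infinite ι]
    (hS : ∀ s ∈ S, ∀ᶠ i in cofinite, z i ∈ s) (hT2 : @T2Space X (generateFrom S)) :
    Subsingleton X := by
  let _ := generateFrom S
  refine ⟨fun x y => by_contra fun hxy => ?_⟩
  obtain ⟨u, v, hu, hv, hxu, hyv, huv⟩ := t2_separation hxy
  obtain ⟨i, hiu, hiv⟩ := ((eventually_cofinite_mem_of_isOpen_generateFrom hS hu ⟨x, hxu⟩).and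
    (eventually_cofinite_mem_of_isOpen_generateFrom hS hv ⟨y, hyv⟩)).exists
  exact huv.ne_of_mem hiu hiv rfl

end GenerateFrom

theorem exists_forall_le_of_compactSpace {X : Type*} [TopologicalSpace X] [CompactSpace X]
    (d : X → X → ℝ) (hopen : ∀ x, IsOpen {y | d x y < 1}) (hself : ∀ x, d x x < 1)
    (hcomm : ∀ x y, d x y = d y x) (htri : ∀ x y z, d x z ≤ d x y + d y z) :
    ∃ K, ∀ x y, d x y ≤ K := by
  obtain ⟨t, ht⟩ := isCompact_univ.elim_finite_subcover (fun x => {y | d x y < 1}) hopen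
    fun x _ => mem_iUnion.2 ⟨x, hself x⟩
  obtain ⟨M, hM⟩ := ((t ×ˢ t).finite_toSet.image (Function.uncurry d)).bddAbove
  refine ⟨1 + M + 1, fun x y => ?_⟩
  obtain ⟨i, hi, hxi⟩ := mem_iUnion₂.1 (ht (mem_univ x))
  obtain ⟨j, hj, hyj⟩ := mem_iUnion₂.1 (ht (mem_univ y))
  have hij : d i j ≤ M := hM ⟨(i, j), Finset.mem_product.2 ⟨hi, hj⟩, rfl⟩
  calc d x y ≤ d x j + d j y := htri x j y
    _ ≤ d x i + d i j + d j y := by gcongr; exact htri x i j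
    _ ≤ 1 + M + 1 := by rw [hcomm x i]; exact add_le_add (add_le_add hxi.le hij) hyj.le

abbrev statesWeakStar (e : A) : TopologicalSpace (states e) :=
  induced (fun (μ : states e) (a : A) => (↑μ : A →L[ℝ] ℝ) a) inferInstance

def stateBalls (e : A) (L : A → ℝ) : Set (Set (states e)) :=
  {B : Set (states e) | ∃ (μ : states e) (ε : ℝ), 0 < ε ∧
    B = {ν : states e | stateDist L ↑μ ↑ν < ε}}

section States

variable {e : A} {L : A → ℝ}

theorem norm_le_one_of_norm_eq_sSup_states
    (hkadison : ∀ a : A, ‖a‖ = sSup {r : ℝ | ∃ μ ∈ states e, r = |μ a|}) : ‖e‖ ≤ 1 := by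
  rw [hkadison]
  refine Real.sSup_le ?_ zero_le_one
  rintro _ ⟨μ, hμ, rfl⟩
  rw [hμ.1, abs_one]

theorem abs_apply_le_norm_of_mem_states {μ : A →L[ℝ] ℝ} (hμ : μ ∈ states e) (a : A) :
    |μ a| ≤ ‖a‖ := by
  simpa [hμ.2] using μ.le_opNorm a

theorem states_eq_of_norm_le_one (he : ‖e‖ ≤ 1) :
    states e = {μ | μ e = 1} ∩ Metric.closedBall 0 1 := by
  ext μ
  simp only [states, mem_inter_iff, mem_ofPred_eq, mem_closedBall_zero_iff]
  refine and_congr_right fun hμe => ⟨le_of_eq, fun hμ => le_antisymm hμ ?_⟩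
  calc 1 = ‖μ e‖ := by rw [hμe, norm_one]
    _ ≤ ‖μ‖ * ‖e‖ := μ.le_opNorm e
    _ ≤ ‖μ‖ := mul_le_of_le_one_right (norm_nonneg μ) he

theorem convex_states (he : ‖e‖ ≤ 1) : Convex ℝ (states e) := by
  rw [states_eq_of_norm_le_one he]
  exact (convex_hyperplane (ContinuousLinearMap.apply ℝ ℝ e).isLinear 1).inter
    (convex_closedBall 0 1)

theorem isCompact_states (he : ‖e‖ ≤ 1) :
    IsCompact (WeakDual.toStrongDual ⁻¹' states e : Set (WeakDual ℝ A)) := by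
  rw [states_eq_of_norm_le_one he, preimage_inter]
  exact (WeakDual.isCompact_closedBall 0 1).inter_left
    (isClosed_eq (WeakDual.eval_continuous e) continuous_const)

theorem compactSpace_states (he : ‖e‖ ≤ 1) : @CompactSpace (states e) (statesWeakStar e) := by
  let _ := statesWeakStar e
  rw [← isCompact_univ_iff, (IsInducing.induced _).isCompact_iff, image_univ]
  convert (isCompact_states he).image (WeakDual.coeFn_continuous (𝕜 := ℝ) (E := A))
  ext f
  exact ⟨fun ⟨μ, hμ⟩ => ⟨μ.1, μ.2, hμ⟩, fun ⟨μ, hμ, hf⟩ => ⟨⟨μ, hμ⟩, hf⟩⟩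

theorem t2Space_statesWeakStar (e : A) : @T2Space (states e) (statesWeakStar e) :=
  let _ := statesWeakStar e
  (IsEmbedding.induced (f := fun (μ : states e) (a : A) => (μ : A →L[ℝ] ℝ) a)
    fun _ _ h => Subtype.ext (DFunLike.coe_injective h)).t2Space

end States

section StateDist

variable {L : A → ℝ} {μ ν σ : A →L[ℝ] ℝ}

def stateDistSet (L : A → ℝ) (μ ν : A →L[ℝ] ℝ) : Set ℝ :=
  {s : ℝ | ∃ a : A, L a ≤ 1 ∧ s = |μ a - ν a|}

theorem stateDist_eq_sSup : stateDist L μ ν = sSup (stateDistSet L μ ν) := rfl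

theorem stateDist_nonneg : 0 ≤ stateDist L μ ν :=
  Real.sSup_nonneg <| by rintro _ ⟨a, -, rfl⟩; exact abs_nonneg _

theorem stateDist_self : stateDist L μ μ = 0 :=
  le_antisymm (Real.sSup_le (by rintro _ ⟨a, -, rfl⟩; simp) le_rfl) stateDist_nonneg

theorem stateDistSet_comm : stateDistSet L μ ν = stateDistSet L ν μ := by
  simp only [stateDistSet, abs_sub_comm (μ _)]

theorem stateDist_comm : stateDist L μ ν = stateDist L ν μ := by
  rw [stateDist_eq_sSup, stateDistSet_comm, stateDist_eq_sSup]

theorem abs_sub_le_stateDist (h : BddAbove (stateDistSet L μ ν)) {a : A} (ha : L a ≤ 1) :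
    |μ a - ν a| ≤ stateDist L μ ν :=
  le_csSup h ⟨a, ha, rfl⟩

theorem bddAbove_stateDistSet_self : BddAbove (stateDistSet L μ μ) :=
  ⟨0, by rintro _ ⟨a, -, rfl⟩; simp⟩

theorem BddAbove.stateDistSet_trans (hμσ : BddAbove (stateDistSet L μ σ))
    (hσν : BddAbove (stateDistSet L σ ν)) : BddAbove (stateDistSet L μ ν) := by
  obtain ⟨C, hC⟩ := hμσ
  obtain ⟨D, hD⟩ := hσν
  refine ⟨C + D, ?_⟩
  rintro _ ⟨a, ha, rfl⟩
  exact (abs_sub_le _ _ _).trans (add_le_add (hC ⟨a, ha, rfl⟩) (hD ⟨a, ha, rfl⟩))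

theorem stateDist_triangle (hμσ : BddAbove (stateDistSet L μ σ))
    (hσν : BddAbove (stateDistSet L σ ν)) :
    stateDist L μ ν ≤ stateDist L μ σ + stateDist L σ ν := by
  refine Real.sSup_le ?_ (add_nonneg stateDist_nonneg stateDist_nonneg)
  rintro _ ⟨a, ha, rfl⟩
  exact (abs_sub_le _ _ _).trans
    (add_le_add (abs_sub_le_stateDist hμσ ha) (abs_sub_le_stateDist hσν ha))

theorem not_bddAbove_stateDistSet_lineMap (h : ¬BddAbove (stateDistSet L μ ν)) {t t' : ℝ}
    (htt' : t ≠ t') :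
    ¬BddAbove (stateDistSet L (AffineMap.lineMap μ ν t) (AffineMap.lineMap μ ν t')) := by
  rintro ⟨C, hC⟩
  refine h ⟨C / |t' - t|, ?_⟩
  rintro _ ⟨a, ha, rfl⟩
  have hpos : 0 < |t' - t| := abs_pos.2 (sub_ne_zero.2 htt'.symm)
  have hdiff :
      AffineMap.lineMap μ ν t a - AffineMap.lineMap μ ν t' a = (t' - t) * (μ a - ν a) := by
    simp only [AffineMap.lineMap_apply_module, add_apply, smul_apply, smul_eq_mul]
    ring
  rw [le_div_iff₀' hpos, ← abs_mul, ← hdiff]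
  exact hC ⟨a, ha, rfl⟩

theorem subsingleton_setOf_bddAbove_stateDistSet_lineMap (h : ¬BddAbove (stateDistSet L μ ν))
    (σ : A →L[ℝ] ℝ) :
    {t : ℝ | BddAbove (stateDistSet L σ (AffineMap.lineMap μ ν t))}.Subsingleton := by
  intro t ht t' ht'
  by_contra htt'
  exact not_bddAbove_stateDistSet_lineMap h htt'
    (BddAbove.stateDistSet_trans (stateDistSet_comm (L := L) ▸ ht) ht')

theorem stateDist_lt_of_not_bddAbove (h : ¬BddAbove (stateDistSet L μ ν)) {ε : ℝ} (hε : 0 < ε) :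
    stateDist L μ ν < ε := by
  rwa [stateDist_eq_sSup, Real.sSup_of_not_bddAbove h]

end StateDist

section LipNorm

variable {e : A} {L : A → ℝ}

theorem bddAbove_stateDistSet (he : ‖e‖ ≤ 1)
    (hLipnorm : generateFrom (stateBalls e L) = statesWeakStar e)
    {μ ν : A →L[ℝ] ℝ} (hμ : μ ∈ states e) (hν : ν ∈ states e) :
    BddAbove (stateDistSet L μ ν) := by
  by_contra h
  have hμν : μ ≠ ν := by rintro rfl; exact h bddAbove_stateDistSet_self
  let z : Icc (0 : ℝ) 1 → states e :=
    fun t => ⟨AffineMap.lineMap μ ν (t : ℝ), (convex_states he).lineMap_mem hμ hν t.2⟩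
  have hz : ∀ B ∈ stateBalls e L, ∀ᶠ t in cofinite, z t ∈ B := by
    rintro _ ⟨σ, ε, hε, rfl⟩
    refine ((subsingleton_setOf_bddAbove_stateDistSet_lineMap h σ).finite.preimage
      Subtype.val_injective.injOn).subset fun t ht => by_contra fun hb => ht ?_
    exact stateDist_lt_of_not_bddAbove hb hε
  have hT2 : @T2Space (states e) (generateFrom (stateBalls e L)) := by
    rw [hLipnorm]
    exact t2Space_statesWeakStar e
  have : Infinite (Icc (0 : ℝ) 1) := (Icc_infinite zero_lt_one).to_subtype
  exact hμν (congrArg Subtype.val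
    ((subsingleton_of_t2Space_generateFrom hz hT2).elim ⟨μ, hμ⟩ ⟨ν, hν⟩))

theorem exists_forall_stateDist_le (he : ‖e‖ ≤ 1)
    (hLipnorm : generateFrom (stateBalls e L) = statesWeakStar e) :
    ∃ K, ∀ μ ∈ states e, ∀ ν ∈ states e, stateDist L μ ν ≤ K := by
  let _ := generateFrom (stateBalls e L)
  have : @CompactSpace (states e) (generateFrom (stateBalls e L)) :=
    hLipnorm ▸ compactSpace_states he
  have hbdd (μ ν : states e) := bddAbove_stateDistSet he hLipnorm μ.2 ν.2
  obtain ⟨K, hK⟩ := exists_forall_le_of_compactSpace (fun μ ν : states e => stateDist L μ ν)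
    (fun μ => GenerateOpen.basic _ ⟨μ, 1, one_pos, rfl⟩)
    (fun μ => stateDist_self.trans_lt one_pos) (fun _ _ => stateDist_comm)
    (fun μ σ ν => stateDist_triangle (hbdd μ σ) (hbdd σ ν))
  exact ⟨K, fun μ hμ ν hν => hK ⟨μ, hμ⟩ ⟨ν, hν⟩⟩

end LipNorm

theorem exists_norm_sub_smul_le {e : A}
    (hkadison : ∀ a : A, ‖a‖ = sSup {r : ℝ | ∃ μ ∈ states e, r = |μ a|}) {b : A} {R : ℝ}
    (hR : 0 ≤ R) (hb : ∀ μ ∈ states e, ∀ ν ∈ states e, |μ b - ν b| ≤ 2 * R) :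
    ∃ c : ℝ, ‖b - c • e‖ ≤ R := by
  set T := (fun μ : A →L[ℝ] ℝ => μ b) '' states e
  have hT : Bornology.IsBounded T := (Metric.isBounded_closedBall (x := 0) (r := ‖b‖)).subset <| by
    rintro _ ⟨μ, hμ, rfl⟩
    simpa using abs_apply_le_norm_of_mem_states hμ b
  have hdiam : sSup T - sInf T ≤ 2 * R := by
    rw [← Real.diam_eq hT]
    refine Metric.diam_le_of_forall_dist_le (by positivity) ?_
    rintro _ ⟨μ, hμ, rfl⟩ _ ⟨ν, hν, rfl⟩
    exact hb μ hμ ν hν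
  refine ⟨(sSup T + sInf T) / 2, ?_⟩
  rw [hkadison]
  refine Real.sSup_le ?_ hR
  rintro _ ⟨μ, hμ, rfl⟩
  have hμ_le : μ b ≤ sSup T := le_csSup hT.bddAbove (mem_image_of_mem _ hμ)
  have hle_μ : sInf T ≤ μ b := csInf_le hT.bddBelow (mem_image_of_mem _ hμ)
  rw [map_sub, map_smul, hμ.1, smul_eq_mul, mul_one, abs_le]
  constructor <;> linarith

theorem apply_add_smul_le {e : A} {L : A → ℝ} (hsub : ∀ a b : A, L (a + b) ≤ L a + L b)
    (hker : ∀ a : A, L a = 0 ↔ ∃ c : ℝ, a = c • e) (a : A) (c : ℝ) : L (a + c • e) ≤ L a := by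
  simpa [(hker _).2 ⟨c, rfl⟩] using hsub a (c • e)

theorem lip_ball_decomposition_general (e : A) (L : A → ℝ)
    (hsub : ∀ a b : A, L (a + b) ≤ L a + L b)
    (hker : ∀ a : A, L a = 0 ↔ ∃ c : ℝ, a = c • e)
    (hkadison : ∀ a : A, ‖a‖ = sSup {r : ℝ | ∃ μ ∈ states e, r = |μ a|})
    (hLipnorm : TopologicalSpace.generateFrom
        {B : Set (states e) | ∃ (μ : states e) (ε : ℝ), 0 < ε ∧
          B = {ν : states e | stateDist L ↑μ ↑ν < ε}}
      = TopologicalSpace.induced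
          (fun (μ : states e) (a : A) => (↑μ : A →L[ℝ] ℝ) a) inferInstance)
    (R : ℝ)
    (hR : sSup {r : ℝ | ∃ μ ∈ states e, ∃ ν ∈ states e, r = stateDist L μ ν} / 2 ≤ R) :
    {a : A | L a ≤ 1} =
      {b : A | ∃ (c : ℝ) (a : A), L a ≤ 1 ∧ ‖a‖ ≤ R ∧ b = c • e + a} := by
  have he := norm_le_one_of_norm_eq_sSup_states hkadison
  set D := {r : ℝ | ∃ μ ∈ states e, ∃ ν ∈ states e, r = stateDist L μ ν}
  obtain ⟨K, hK⟩ := exists_forall_stateDist_le he hLipnorm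
  have hD : BddAbove D := ⟨K, by rintro _ ⟨μ, hμ, ν, hν, rfl⟩; exact hK μ hμ ν hν⟩
  have hdiam (μ) (hμ : μ ∈ states e) (ν) (hν : ν ∈ states e) : stateDist L μ ν ≤ 2 * R := by
    linarith [le_csSup hD ⟨μ, hμ, ν, hν, rfl⟩]
  have hR0 : 0 ≤ R := by
    linarith [Real.sSup_nonneg (s := D) (by rintro _ ⟨μ, -, ν, -, rfl⟩; exact stateDist_nonneg)]
  ext b
  refine ⟨fun hb => ?_, ?_⟩
  · obtain ⟨c, hc⟩ := exists_norm_sub_smul_le hkadison hR0 fun μ hμ ν hν =>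
      (abs_sub_le_stateDist (bddAbove_stateDistSet he hLipnorm hμ hν) hb).trans (hdiam μ hμ ν hν)
    refine ⟨c, b - c • e, ?_, hc, by abel⟩
    simpa [sub_eq_add_neg, ← neg_smul] using (apply_add_smul_le hsub hker b (-c)).trans hb
  · rintro ⟨c, a, ha, -, rfl⟩
    exact (add_comm (c • e) a ▸ apply_add_smul_le hsub hker a c).trans ha

/-- let `(A, e)` be an order-unit space (encoded via Kadison's
representation: the norm is the sup of `|μ(a)|` over states) with a closed Lip-norm
`L` (a seminorm vanishing exactly on `ℝe`, with closed unit ball, such that `ρ_L`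
metrizes the weak-* topology on the state space). If `R` is at least the radius
`r_A` (half the `ρ_L`-diameter of the state space), then
`{a : L(a) ≤ 1} = ℝe + {a : L(a) ≤ 1, ‖a‖ ≤ R}`. -/
theorem lip_ball_decomposition (e : A) (L : A → ℝ)
    (hsub : ∀ a b : A, L (a + b) ≤ L a + L b)
    (hsmul : ∀ (c : ℝ) (a : A), L (c • a) = |c| * L a)
    (hker : ∀ a : A, L a = 0 ↔ ∃ c : ℝ, a = c • e)
    (hclosed : IsClosed {a : A | L a ≤ 1})
    (hkadison : ∀ a : A, ‖a‖ = sSup {r : ℝ | ∃ μ ∈ states e, r = |μ a|})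
    (hLipnorm : TopologicalSpace.generateFrom
        {B : Set (states e) | ∃ (μ : states e) (ε : ℝ), 0 < ε ∧
          B = {ν : states e | stateDist L ↑μ ↑ν < ε}}
      = TopologicalSpace.induced
          (fun (μ : states e) (a : A) => (↑μ : A →L[ℝ] ℝ) a) inferInstance)
    (R : ℝ)
    (hR : sSup {r : ℝ | ∃ μ ∈ states e, ∃ ν ∈ states e, r = stateDist L μ ν} / 2 ≤ R) :
    {a : A | L a ≤ 1} =
      {b : A | ∃ (c : ℝ) (a : A), L a ≤ 1 ∧ ‖a‖ ≤ R ∧ b = c • e + a} :=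
  lip_ball_decomposition_general e L hsub hker hkadison hLipnorm R hR
end

section
/- Continuity of the quotient norm in a continuous field: let ({A_t}, Γ) be a continuous field of real Banach spaces over a locally compact Hausdorff space T, and let f ∈ Γ be a nowhere-vanishing continuous section. Denote by ‖·‖~_t the quotient norm on A_t / ℝ·f_t. Then for every g ∈ Γ, the function t ↦ ‖g̃_t‖~_t (the quotient norm of the class of g_t) is continuous on T. -/
/-- continuity of the quotient norm, for the constant field `A_t = A`
with `Γ = C(T, A)`: if `f : T → A` is a continuous nowhere-vanishing section of a
(constant) field of real Banach spaces over a locally compact Hausdorff space `T`,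
then for every continuous section `g : T → A` the quotient norm
`t ↦ ‖g̃_t‖~ = inf_{c ∈ ℝ} ‖g t − c • f t‖` of the class of `g t` in `A / ℝ·f t`
is continuous on `T`. -/
theorem quotient_norm_continuous {T : Type*} [TopologicalSpace T]
    [LocallyCompactSpace T] [T2Space T]
    {A : Type*} [NormedAddCommGroup A] [NormedSpace ℝ A] [CompleteSpace A]
    (f : T → A) (hf : Continuous f) (hnv : ∀ t, f t ≠ 0)
    (g : T → A) (hg : Continuous g) :
    Continuous fun t => sInf (Set.range fun c : ℝ => ‖g t - c • f t‖) := by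
  set F : T → ℝ := fun t => sInf (Set.range fun c : ℝ => ‖g t - c • f t‖) with hF
  have hfpos : ∀ t, (0:ℝ) < ‖f t‖ := fun t => norm_pos_iff.mpr (hnv t)
  set R : T → ℝ := fun t => (2 * ‖g t‖ + 1) / ‖f t‖ with hR
  have hRcont : Continuous R :=
    Continuous.div (by continuity) hf.norm (fun t => (hfpos t).ne')
  have hRnonneg : ∀ t, 0 ≤ R t := fun t =>
    div_nonneg (by positivity) (norm_nonneg _)
  have hbdd : ∀ t, BddBelow (Set.range fun c : ℝ => ‖g t - c • f t‖) :=
    fun t => ⟨0, by rintro x ⟨c, rfl⟩; positivity⟩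
  have hne : ∀ t, (Set.range fun c : ℝ => ‖g t - c • f t‖).Nonempty :=
    fun t => ⟨‖g t - (0:ℝ) • f t‖, ⟨0, rfl⟩⟩
  have hFle : ∀ t, F t ≤ ‖g t‖ := by
    intro t
    have := csInf_le (hbdd t) ⟨(0:ℝ), rfl⟩
    simpa [hF] using this
  have key : ∀ s t : T, F s ≤ F t + (‖g s - g t‖ + R t * ‖f s - f t‖) := by
    intro s t
    refine le_of_forall_pos_le_add ?_
    intro ε hε
    set δ := min ε 1 with hδ
    have hδ0 : 0 < δ := lt_min hε one_pos
    have hδε : δ ≤ ε := min_le_left _ _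
    have hδ1 : δ ≤ 1 := min_le_right _ _
    obtain ⟨x, hx, hxlt⟩ := exists_lt_of_csInf_lt (hne t)
      (show F t < F t + δ by linarith)
    obtain ⟨c, rfl⟩ := hx
    -- bound |c|
    have hcb : |c| * ‖f t‖ ≤ 2 * ‖g t‖ + 1 := by
      have h1 : ‖c • f t‖ ≤ ‖g t - c • f t‖ + ‖g t‖ := by
        calc ‖c • f t‖ = ‖g t - (g t - c • f t)‖ := by congr 1; abel
          _ ≤ ‖g t‖ + ‖g t - c • f t‖ := norm_sub_le _ _
          _ = _ := add_comm _ _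
      have h2 : ‖c • f t‖ = |c| * ‖f t‖ := by
        rw [norm_smul, Real.norm_eq_abs]
      have := hFle t
      nlinarith
    have hcR : |c| ≤ R t := by
      rw [hR]
      rw [le_div_iff₀ (hfpos t)]
      exact hcb
    have h3 : F s ≤ ‖g s - c • f s‖ := csInf_le (hbdd s) ⟨c, rfl⟩
    have h4 : ‖g s - c • f s‖ ≤ ‖g t - c • f t‖ + ‖g s - g t‖ + |c| * ‖f s - f t‖ := by
      have heq : g s - c • f s = (g t - c • f t) + (g s - g t) + c • (f t - f s) := by
        rw [smul_sub]; abel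
      rw [heq]
      refine (norm_add_le _ _).trans ?_
      have h5 : ‖c • (f t - f s)‖ = |c| * ‖f s - f t‖ := by
        rw [norm_smul, Real.norm_eq_abs, norm_sub_rev]
      rw [h5]
      gcongr
      exact norm_add_le _ _
    have h6 : |c| * ‖f s - f t‖ ≤ R t * ‖f s - f t‖ :=
      mul_le_mul_of_nonneg_right hcR (norm_nonneg _)
    linarith
  rw [continuous_iff_continuousAt]
  intro t₀
  have hD : Filter.Tendsto
      (fun t => ‖g t - g t₀‖ + (R t + R t₀) * ‖f t - f t₀‖) (nhds t₀) (nhds 0) := by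
    have hc : Continuous fun t => ‖g t - g t₀‖ + (R t + R t₀) * ‖f t - f t₀‖ := by
      continuity
    have := hc.tendsto t₀
    simpa using this
  have hup : ∀ t, F t ≤ F t₀ + (‖g t - g t₀‖ + (R t + R t₀) * ‖f t - f t₀‖) := by
    intro t
    have := key t t₀
    have h6 : R t₀ * ‖f t - f t₀‖ ≤ (R t + R t₀) * ‖f t - f t₀‖ :=
      mul_le_mul_of_nonneg_right (by linarith [hRnonneg t]) (norm_nonneg _)
    linarith
  have hlo : ∀ t, F t₀ - (‖g t - g t₀‖ + (R t + R t₀) * ‖f t - f t₀‖) ≤ F t := by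
    intro t
    have := key t₀ t
    rw [norm_sub_rev (g t₀), norm_sub_rev (f t₀)] at this
    have h6 : R t * ‖f t - f t₀‖ ≤ (R t + R t₀) * ‖f t - f t₀‖ :=
      mul_le_mul_of_nonneg_right (by linarith [hRnonneg t₀]) (norm_nonneg _)
    linarith
  have hTlo : Filter.Tendsto
      (fun t => F t₀ - (‖g t - g t₀‖ + (R t + R t₀) * ‖f t - f t₀‖)) (nhds t₀)
      (nhds (F t₀)) := by
    have := Filter.Tendsto.sub (tendsto_const_nhds (x := F t₀) (f := nhds t₀)) hD
    simpa using this
  have hTup : Filter.Tendsto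
      (fun t => F t₀ + (‖g t - g t₀‖ + (R t + R t₀) * ‖f t - f t₀‖)) (nhds t₀)
      (nhds (F t₀)) := by
    have := Filter.Tendsto.add (tendsto_const_nhds (x := F t₀) (f := nhds t₀)) hD
    simpa using this
  exact tendsto_of_tendsto_of_tendsto_of_le_of_le hTlo hTup
    (fun t => hlo t) (fun t => hup t)
end

section
/- Jordan decomposition approximation of almost-states: let B be an order-unit space (realized as affine functions on its state space S(B)), let g be a bounded linear functional on B and δ ≥ 0 with 1 ≥ ‖g‖ ≥ g(e_B) ≥ 1 − δ > 0. Then there exists a state q ∈ S(B) with ‖q − g‖ ≤ (3/2)δ. -/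
/-!
Write `ε = 1 - g e`. Rather than decomposing a Hahn–Banach extension of `g` to `C(S(B))`, apply
Hahn–Banach directly on `B` to the inf-convolution of the sublinear functionals `‖·‖` and
`g + ε‖·‖`: this yields a linear `q` with `q e = 1`, `q ≤ ‖·‖` and `q ≤ g + ε‖·‖`, i.e. a state
with `‖q - g‖ ≤ ε ≤ δ`, as soon as `t ≤ ‖t e - x‖ + g x + ε‖x‖` for all `t` and `x`.
This inequality is where the order unit enters. If all states take `x` into `[a, b]`, then
`‖2x - (a + b)e‖ ≤ b - a`, and `‖g‖ ≤ 1` gives `g x ≥ a - ε(a + b)/2`; the states take `x` into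
`[t - ‖t e - x‖, ‖x‖]`.
-/

section InfConvolution

variable {E : Type*} [AddCommGroup E] [Module ℝ E] {p₁ p₂ : E → ℝ}

-- `⨅` over `ℝ` is junk when unbounded below; the lemmas using it assume a common linear minorant.
noncomputable def infConv (p₁ p₂ : E → ℝ) (b : E) : ℝ := ⨅ x, p₁ (b - x) + p₂ x

theorem infConv_smul (hom₁ : ∀ c : ℝ, 0 < c → ∀ x, p₁ (c • x) = c * p₁ x)
    (hom₂ : ∀ c : ℝ, 0 < c → ∀ x, p₂ (c • x) = c * p₂ x) {c : ℝ} (hc : 0 < c) (b : E) :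
    infConv p₁ p₂ (c • b) = c * infConv p₁ p₂ b := by
  rw [infConv, infConv, Real.mul_iInf_of_nonneg hc.le]
  refine Function.Surjective.iInf_congr (c⁻¹ • ·) (fun x => ⟨c • x, inv_smul_smul₀ hc.ne' x⟩)
    fun x => ?_
  rw [mul_add, ← hom₁ c hc, ← hom₂ c hc, smul_sub, smul_inv_smul₀ hc.ne']

theorem infConv_le {ℓ : E →ₗ[ℝ] ℝ} (hℓ₁ : ∀ x, ℓ x ≤ p₁ x) (hℓ₂ : ∀ x, ℓ x ≤ p₂ x) (b x : E) :
    infConv p₁ p₂ b ≤ p₁ (b - x) + p₂ x := by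
  refine ciInf_le ⟨ℓ b, ?_⟩ x
  rintro _ ⟨y, rfl⟩
  calc ℓ b = ℓ (b - y) + ℓ y := by rw [map_sub, sub_add_cancel]
    _ ≤ p₁ (b - y) + p₂ y := add_le_add (hℓ₁ _) (hℓ₂ _)

theorem infConv_add_le {ℓ : E →ₗ[ℝ] ℝ} (hℓ₁ : ∀ x, ℓ x ≤ p₁ x) (hℓ₂ : ∀ x, ℓ x ≤ p₂ x)
    (add₁ : ∀ x y, p₁ (x + y) ≤ p₁ x + p₁ y) (add₂ : ∀ x y, p₂ (x + y) ≤ p₂ x + p₂ y)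
    (b₁ b₂ : E) : infConv p₁ p₂ (b₁ + b₂) ≤ infConv p₁ p₂ b₁ + infConv p₁ p₂ b₂ := by
  refine le_ciInf_add_ciInf fun x₁ x₂ => (infConv_le hℓ₁ hℓ₂ _ (x₁ + x₂)).trans ?_
  have h := add₁ (b₁ - x₁) (b₂ - x₂)
  rw [sub_add_sub_comm] at h
  linarith [add₂ x₁ x₂]

theorem LinearPMap.exists_extension_of_le_infConv (f : E →ₗ.[ℝ] ℝ)
    (hom₁ : ∀ c : ℝ, 0 < c → ∀ x, p₁ (c • x) = c * p₁ x) (add₁ : ∀ x y, p₁ (x + y) ≤ p₁ x + p₁ y)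
    (hom₂ : ∀ c : ℝ, 0 < c → ∀ x, p₂ (c • x) = c * p₂ x) (add₂ : ∀ x y, p₂ (x + y) ≤ p₂ x + p₂ y)
    {ℓ : E →ₗ[ℝ] ℝ} (hℓ₁ : ∀ x, ℓ x ≤ p₁ x) (hℓ₂ : ∀ x, ℓ x ≤ p₂ x)
    (hf : ∀ x : f.domain, f x ≤ infConv p₁ p₂ x) :
    ∃ q : E →ₗ[ℝ] ℝ, (∀ x : f.domain, q x = f x) ∧ (∀ x, q x ≤ p₁ x) ∧ ∀ x, q x ≤ p₂ x := by
  obtain ⟨q, hqf, hq⟩ := exists_extension_of_le_sublinear f (infConv p₁ p₂)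
    (fun _ hc => infConv_smul hom₁ hom₂ hc) (infConv_add_le hℓ₁ hℓ₂ add₁ add₂) hf
  have hp₁ : p₁ 0 = 0 := by have h := hom₁ 2 two_pos 0; rw [smul_zero] at h; linarith
  have hp₂ : p₂ 0 = 0 := by have h := hom₂ 2 two_pos 0; rw [smul_zero] at h; linarith
  refine ⟨q, hqf, fun x => (hq x).trans ?_, fun x => (hq x).trans ?_⟩
  · simpa [hp₂] using infConv_le hℓ₁ hℓ₂ x 0
  · simpa [hp₁] using infConv_le hℓ₁ hℓ₂ x x

end InfConvolution

section Normed

variable {E : Type*} [NormedAddCommGroup E] [NormedSpace ℝ E]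

theorem ContinuousLinearMap.abs_apply_le_norm {f : E →L[ℝ] ℝ} (hf : ‖f‖ ≤ 1) (x : E) :
    |f x| ≤ ‖x‖ := by
  simpa using f.le_of_opNorm_le hf x

theorem ContinuousLinearMap.apply_le_norm {f : E →L[ℝ] ℝ} (hf : ‖f‖ ≤ 1) (x : E) : f x ≤ ‖x‖ :=
  (le_abs_self _).trans (f.abs_apply_le_norm hf x)

theorem LinearMap.abs_apply_le_of_apply_le (f : E →ₗ[ℝ] ℝ) {C : ℝ} (h : ∀ x, f x ≤ C * ‖x‖)
    (x : E) : |f x| ≤ C * ‖x‖ :=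
  abs_le.2 ⟨by linarith [norm_neg x ▸ map_neg f x ▸ h (-x)], h x⟩

theorem exists_apply_eq_one_norm_le_one_norm_sub_le (e : E) (g : E →L[ℝ] ℝ) (hg : ‖g‖ ≤ 1)
    {ρ : ℝ} (hρ : 0 ≤ ρ) (h : ∀ (t : ℝ) x, t ≤ ‖t • e - x‖ + g x + ρ * ‖x‖) :
    ∃ q : E →L[ℝ] ℝ, q e = 1 ∧ ‖q‖ ≤ 1 ∧ ‖q - g‖ ≤ ρ := by
  have he : e ≠ 0 := by
    rintro rfl
    have h₁₀ := h 1 0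
    norm_num at h₁₀
  let f := (LinearPMap.mkSpanSingleton e (1 : ℝ) he : E →ₗ.[ℝ] ℝ)
  have hf : ∀ x : f.domain, f x ≤ infConv (‖·‖) (fun x => g x + ρ * ‖x‖) x := by
    rintro ⟨_, hx⟩
    obtain ⟨t, rfl⟩ := Submodule.mem_span_singleton.1 hx
    rw [show f ⟨t • e, hx⟩ = t from
      (LinearPMap.mkSpanSingleton'_apply e (1 : ℝ) _ t hx).trans (mul_one t)]
    exact le_ciInf fun x => (h t x).trans_eq (add_assoc _ _ _)
  obtain ⟨q, hqe, hq₁, hq₂⟩ := f.exists_extension_of_le_infConv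
    (fun c hc x => norm_smul_of_nonneg hc.le x) norm_add_le
    (fun c hc x => by simp [norm_smul_of_nonneg hc.le]; ring)
    (fun x y => by simp only [map_add]; nlinarith [norm_add_le x y])
    (ℓ := g.toLinearMap) (g.apply_le_norm hg)
    (fun x => by simp only [ContinuousLinearMap.coe_coe]; nlinarith [norm_nonneg x]) hf
  let Q := q.mkContinuous 1 <|
    q.abs_apply_le_of_apply_le fun y => (hq₁ y).trans_eq (one_mul _).symm
  refine ⟨Q, ?_, q.mkContinuous_norm_le zero_le_one _, ?_⟩
  · exact (hqe ⟨e, Submodule.mem_span_singleton_self e⟩).trans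
      (LinearPMap.mkSpanSingleton_apply ℝ ℝ he 1)
  · exact (Q - g).opNorm_le_bound hρ <|
      (Q - g).toLinearMap.abs_apply_le_of_apply_le fun y => sub_le_iff_le_add'.2 (hq₂ y)

end Normed

section OrderUnit

variable {B : Type*} [NormedAddCommGroup B] [NormedSpace ℝ B] {e : B}

def IsOrderUnitNorm (e : B) : Prop :=
  ∀ b : B, ‖b‖ = sSup {r : ℝ | ∃ μ : B →L[ℝ] ℝ, μ e = 1 ∧ ‖μ‖ = 1 ∧ r = |μ b|}

namespace IsOrderUnitNorm

theorem norm_le (hK : IsOrderUnitNorm e) {b : B} {r : ℝ} (hr : 0 ≤ r)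
    (h : ∀ μ : B →L[ℝ] ℝ, μ e = 1 → ‖μ‖ = 1 → |μ b| ≤ r) : ‖b‖ ≤ r := by
  rw [hK b]
  exact Real.sSup_le (by rintro _ ⟨μ, hμe, hμ, rfl⟩; exact h μ hμe hμ) hr

theorem norm_eq_one (hK : IsOrderUnitNorm e) (he : e ≠ 0) : ‖e‖ = 1 := by
  obtain ⟨_, μ, hμe, hμ, -⟩ :
      {r : ℝ | ∃ μ : B →L[ℝ] ℝ, μ e = 1 ∧ ‖μ‖ = 1 ∧ r = |μ e|}.Nonempty := by
    rw [Set.nonempty_iff_ne_empty]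
    intro hS
    exact he (norm_eq_zero.1 ((hK e).trans (hS ▸ Real.sSup_empty)))
  refine le_antisymm (hK.norm_le zero_le_one fun μ hμe _ => by simp [hμe]) ?_
  simpa [hμe, hμ] using μ.le_opNorm e

theorem le_apply_of_forall_state_mem_Icc (hK : IsOrderUnitNorm e) {g : B →L[ℝ] ℝ} (hg : ‖g‖ ≤ 1)
    {x : B} {a b : ℝ} (hab : a ≤ b)
    (hx : ∀ μ : B →L[ℝ] ℝ, μ e = 1 → ‖μ‖ = 1 → μ x ∈ Set.Icc a b) :
    a - (1 - g e) * (a + b) / 2 ≤ g x := by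
  have hy : ‖(2 : ℝ) • x - (a + b) • e‖ ≤ b - a :=
    hK.norm_le (sub_nonneg.2 hab) fun μ hμe hμ => by
      obtain ⟨ha, hb⟩ := hx μ hμe hμ
      rw [map_sub, map_smul, map_smul, hμe, smul_eq_mul, smul_eq_mul, abs_le]
      constructor <;> linarith
  have hgy := neg_le_of_abs_le ((g.abs_apply_le_norm hg _).trans hy)
  rw [map_sub, map_smul, map_smul, smul_eq_mul, smul_eq_mul] at hgy
  linarith

theorem le_norm_smul_sub_add (hK : IsOrderUnitNorm e) (he : ‖e‖ = 1) {g : B →L[ℝ] ℝ}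
    (hg : ‖g‖ ≤ 1) (t : ℝ) (x : B) : t ≤ ‖t • e - x‖ + g x + (1 - g e) * ‖x‖ := by
  have hge : g e ≤ 1 := he ▸ g.apply_le_norm hg e
  have hm : t - ‖t • e - x‖ ≤ ‖x‖ := by
    have := norm_sub_norm_le (t • e) x
    rw [norm_smul, he, mul_one, Real.norm_eq_abs] at this
    linarith [le_abs_self t]
  have hgx := hK.le_apply_of_forall_state_mem_Icc hg hm fun μ hμe hμ => by
    have := μ.apply_le_norm hμ.le (t • e - x)
    rw [map_sub, map_smul, hμe, smul_eq_mul, mul_one] at this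
    exact ⟨by linarith, μ.apply_le_norm hμ.le x⟩
  nlinarith [mul_nonneg (sub_nonneg.2 hge) (sub_nonneg.2 hm)]

end IsOrderUnitNorm

end OrderUnit

theorem exists_state_close_general {B : Type*} [NormedAddCommGroup B] [NormedSpace ℝ B]
    (e : B)
    (hkadison : ∀ b : B,
      ‖b‖ = sSup {r : ℝ | ∃ μ : B →L[ℝ] ℝ, μ e = 1 ∧ ‖μ‖ = 1 ∧ r = |μ b|})
    (g : B →L[ℝ] ℝ) (δ : ℝ)
    (h1 : ‖g‖ ≤ 1) (h3 : 1 - δ ≤ g e) (h4 : 0 < 1 - δ) :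
    ∃ q : B →L[ℝ] ℝ, q e = 1 ∧ ‖q‖ = 1 ∧ ‖q - g‖ ≤ (3 / 2) * δ := by
  have he : e ≠ 0 := by
    rintro rfl
    rw [map_zero] at h3
    linarith
  have he₁ : ‖e‖ = 1 := IsOrderUnitNorm.norm_eq_one hkadison he
  have hge : g e ≤ 1 := he₁ ▸ g.apply_le_norm h1 e
  obtain ⟨q, hqe, hq, hqg⟩ := exists_apply_eq_one_norm_le_one_norm_sub_le e g h1
    (sub_nonneg.2 hge) (IsOrderUnitNorm.le_norm_smul_sub_add hkadison he₁ h1)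
  refine ⟨q, hqe, hq.antisymm ?_, hqg.trans (by linarith)⟩
  simpa [hqe, he₁] using q.le_opNorm e

/-- Jordan decomposition approximation of almost-states: let `(B, e)`
be an order-unit space (encoded via Kadison's representation: the norm is the sup of
`|μ(b)|` over states, the states being the functionals `μ` with `μ(e) = ‖μ‖ = 1`).
If `g` is a bounded linear functional and `δ ≥ 0` with
`1 ≥ ‖g‖ ≥ g(e) ≥ 1 − δ > 0`, then there is a state `q` with `‖q − g‖ ≤ (3/2)δ`. -/
theorem exists_state_close {B : Type*} [NormedAddCommGroup B] [NormedSpace ℝ B]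
    (e : B)
    (hkadison : ∀ b : B,
      ‖b‖ = sSup {r : ℝ | ∃ μ : B →L[ℝ] ℝ, μ e = 1 ∧ ‖μ‖ = 1 ∧ r = |μ b|})
    (g : B →L[ℝ] ℝ) (δ : ℝ) (hδ : 0 ≤ δ)
    (h1 : ‖g‖ ≤ 1) (h2 : g e ≤ ‖g‖) (h3 : 1 - δ ≤ g e) (h4 : 0 < 1 - δ) :
    ∃ q : B →L[ℝ] ℝ, q e = 1 ∧ ‖q‖ = 1 ∧ ‖q - g‖ ≤ (3 / 2) * δ :=
  exists_state_close_general e hkadison g δ h1 h3 h4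
end

section
/- Locality of covering by chosen sections: let X_t (t ∈ T) be compact subsets of a common normed space V varying over a topological space T, t₀ ∈ T, and suppose {a_n} and {a'_n} are two sequences dense in X_{t₀}, lifted to maps f_n, f'_n : T → V continuous at t₀ with (f_n)_{t₀} = a_n, (f'_n)_{t₀} = a'_n. If for every ε > 0 there are N and a neighborhood U of t₀ such that the open ε-balls around (f_1)_t, …, (f_N)_t cover X_t for all t ∈ U, then the same property (for every ε > 0) holds with the sequence f'_n in place of f_n. -/
/-- locality of covering by chosen sections: let `X_t` (`t ∈ T`) be
compact subsets of a normed space `V`, `t₀ ∈ T`, and `f_n`, `f'_n : T → V` maps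
continuous at `t₀` whose values at `t₀` lie in and are dense in `X_{t₀}`. If for
every `ε > 0` there are `N` and a neighborhood `U` of `t₀` such that the open
`ε`-balls around `(f_1)_t, …, (f_N)_t` cover `X_t` for all `t ∈ U`, then the same
property holds with `f'` in place of `f`. -/
theorem covering_property_independent_of_sequence {T : Type*} [TopologicalSpace T]
    {V : Type*} [NormedAddCommGroup V] [NormedSpace ℝ V]
    (X : T → Set V) (hX : ∀ t, IsCompact (X t)) (t₀ : T)
    (f f' : ℕ → T → V)
    (hf : ∀ n, ContinuousAt (f n) t₀) (hf' : ∀ n, ContinuousAt (f' n) t₀)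
    (hmem : ∀ n, f n t₀ ∈ X t₀) (hmem' : ∀ n, f' n t₀ ∈ X t₀)
    (hdense : X t₀ ⊆ closure (Set.range fun n => f n t₀))
    (hdense' : X t₀ ⊆ closure (Set.range fun n => f' n t₀))
    (h : ∀ ε > 0, ∃ N : ℕ, ∃ U ∈ nhds t₀, ∀ t ∈ U, ∀ x ∈ X t, ∃ n < N, ‖x - f n t‖ < ε) :
    ∀ ε > 0, ∃ N : ℕ, ∃ U ∈ nhds t₀, ∀ t ∈ U, ∀ x ∈ X t, ∃ n < N, ‖x - f' n t‖ < ε := by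
  intro ε hε
  obtain ⟨N, U, hU, hcov⟩ := h (ε/3) (by linarith)
  -- for each n, choose σ n approximating f n t₀ by f' (σ n) t₀
  have choose : ∀ n : ℕ, ∃ m : ℕ, ‖f n t₀ - f' m t₀‖ < ε/3 := by
    intro n
    have := Metric.mem_closure_iff.mp (hdense' (hmem n)) (ε/3) (by linarith)
    obtain ⟨b, ⟨m, rfl⟩, hb⟩ := this
    exact ⟨m, by simpa [dist_eq_norm] using hb⟩
  choose σ hσ using choose
  set N' := (Finset.range N).sup σ + 1 with hN'
  -- neighborhoods where f n and f' (σ n) stay close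
  have hnb : ∀ n : ℕ, {t | ‖f n t - f' (σ n) t‖ < 2*ε/3} ∈ nhds t₀ := by
    intro n
    have hc : ContinuousAt (fun t => ‖f n t - f' (σ n) t‖) t₀ :=
      ((hf n).sub (hf' (σ n))).norm
    have : Set.Iio (2*ε/3) ∈ nhds (‖f n t₀ - f' (σ n) t₀‖) :=
      Iio_mem_nhds (by linarith [hσ n])
    exact hc this
  refine ⟨N', U ∩ ⋂ n ∈ Finset.range N, {t | ‖f n t - f' (σ n) t‖ < 2*ε/3},
    Filter.inter_mem hU ?_, ?_⟩
  · exact (Filter.biInter_finset_mem _).mpr fun n _ => hnb n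
  · rintro t ⟨htU, ht2⟩ x hx
    obtain ⟨n, hn, hxn⟩ := hcov t htU x hx
    refine ⟨σ n, ?_, ?_⟩
    · have : σ n ≤ (Finset.range N).sup σ := Finset.le_sup (Finset.mem_range.mpr hn)
      omega
    · have ht2' : ‖f n t - f' (σ n) t‖ < 2*ε/3 := by
        have := Set.mem_iInter₂.mp ht2 n (Finset.mem_range.mpr hn)
        exact this
      calc ‖x - f' (σ n) t‖ ≤ ‖x - f n t‖ + ‖f n t - f' (σ n) t‖ := norm_sub_le_norm_sub_add_norm_sub _ _ _
        _ < ε/3 + 2*ε/3 := by linarith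
        _ = ε := by ring
end

section
/- Let (V, e) be a real vector space with distinguished element e carrying, for each t in a topological space T, an order-unit norm ‖·‖_t and a Lip-norm L_t, forming a uniformly continuous field: for each t₀ and ε > 0 there is a neighborhood U of t₀ with (1−ε)‖·‖_{t₀} ≤ ‖·‖_t ≤ (1+ε)‖·‖_{t₀} and (1−ε)L_{t₀} ≤ L_t on U. Then for any R > 0, t₀ ∈ T, and any sequence {v_n} dense in D_R(V_{t₀}) = {v : L_{t₀}(v) ≤ 1, ‖v‖_{t₀} ≤ R}, and any ε > 0, there exist N and a neighborhood U of t₀ such that for all t ∈ U the open (R+2)ε-balls (in ‖·‖_t) centered at v₁, …, v_N cover D_R(V_t). -/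
/-- let `(V, e)` carry, for each `t` in a topological space `T`, an
order-unit norm `N t` and a Lip-norm `L t` (a seminorm vanishing exactly on `ℝe`),
forming a uniformly continuous field of order-unit spaces and Lip-norms. Then for
any `R > 0`, `t₀ ∈ T`, any sequence `{v_n}` dense in
`D_R(V_{t₀}) = {v : L_{t₀}(v) ≤ 1, N_{t₀}(v) ≤ R}` (which is totally bounded), and
any `ε > 0`, there are `N` and a neighborhood `U` of `t₀` such that for all `t ∈ U`
the open `(R+2)ε`-balls in `N t` centered at `v_1, …, v_N` cover `D_R(V_t)`. -/
theorem uniform_field_covering {T : Type*} [TopologicalSpace T]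
    {V : Type*} [AddCommGroup V] [Module ℝ V] (e : V)
    (N : T → V → ℝ) (L : T → V → ℝ)
    (hNsub : ∀ t (v w : V), N t (v + w) ≤ N t v + N t w)
    (hNsmul : ∀ t (c : ℝ) (v : V), N t (c • v) = |c| * N t v)
    (hNdef : ∀ t (v : V), N t v = 0 → v = 0)
    (hLsub : ∀ t (v w : V), L t (v + w) ≤ L t v + L t w)
    (hLsmul : ∀ t (c : ℝ) (v : V), L t (c • v) = |c| * L t v)
    (hLker : ∀ t (v : V), L t v = 0 ↔ ∃ c : ℝ, v = c • e)
    (hLcont : ∀ v : V, Continuous fun t => L t v)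
    (hNcont : ∀ v : V, Continuous fun t => N t v)
    (hunif : ∀ (t₁ : T) (ε : ℝ), 0 < ε → ∃ U ∈ nhds t₁, ∀ t ∈ U, ∀ v : V,
      (1 - ε) * N t₁ v ≤ N t v ∧ N t v ≤ (1 + ε) * N t₁ v ∧ (1 - ε) * L t₁ v ≤ L t v)
    (R : ℝ) (hR : 0 < R) (t₀ : T) (v : ℕ → V)
    (hvmem : ∀ n, L t₀ (v n) ≤ 1 ∧ N t₀ (v n) ≤ R)
    (hvdense : ∀ w : V, L t₀ w ≤ 1 → N t₀ w ≤ R → ∀ ε > 0, ∃ n, N t₀ (w - v n) < ε)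
    (htb : ∀ ε > 0, ∃ s : Finset V, (∀ w ∈ s, L t₀ w ≤ 1 ∧ N t₀ w ≤ R) ∧
      ∀ w : V, L t₀ w ≤ 1 → N t₀ w ≤ R → ∃ u ∈ s, N t₀ (w - u) < ε)
    (ε : ℝ) (hε : 0 < ε) :
    ∃ M : ℕ, ∃ U ∈ nhds t₀, ∀ t ∈ U, ∀ w : V, L t w ≤ 1 → N t w ≤ R →
      ∃ n < M, N t (w - v n) < (R + 2) * ε := by
  classical
  set δ : ℝ := min (ε/4) (1/2) with hδdef
  have hδpos : 0 < δ := lt_min (by linarith) (by norm_num)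
  have hδle : δ ≤ ε/4 := min_le_left _ _
  have hδhalf : δ ≤ 1/2 := min_le_right _ _
  obtain ⟨s, hs1, hs2⟩ := htb (δ/2) (by positivity)
  have hchoice : ∀ u ∈ s, ∃ n, N t₀ (u - v n) < δ/2 := fun u hu =>
    hvdense u (hs1 u hu).1 (hs1 u hu).2 (δ/2) (by positivity)
  choose! f hf using hchoice
  obtain ⟨U, hU, hUs⟩ := hunif t₀ δ hδpos
  refine ⟨s.sup f + 1, U, hU, ?_⟩
  intro t ht w hLw hNw
  have h1 := hUs t ht
  have hL0 : L t₀ ((1-δ) • w) ≤ 1 := by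
    rw [hLsmul, abs_of_nonneg (by linarith : (0:ℝ) ≤ 1 - δ)]
    calc (1-δ) * L t₀ w ≤ L t w := (h1 w).2.2
    _ ≤ 1 := hLw
  have hN0 : N t₀ ((1-δ) • w) ≤ R := by
    rw [hNsmul, abs_of_nonneg (by linarith : (0:ℝ) ≤ 1 - δ)]
    calc (1-δ) * N t₀ w ≤ N t w := (h1 w).1
    _ ≤ R := hNw
  have hN0' : N t₀ w ≤ 2*R := by
    have h2 := (h1 w).1
    nlinarith
  obtain ⟨u, hu, hwu⟩ := hs2 _ hL0 hN0
  refine ⟨f u, Nat.lt_succ_of_le (Finset.le_sup hu), ?_⟩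
  have key : N t₀ ((1-δ) • w - v (f u)) < δ := by
    have h3 : N t₀ ((1-δ) • w - v (f u)) ≤ N t₀ ((1-δ) • w - u) + N t₀ (u - v (f u)) := by
      have := hNsub t₀ ((1-δ) • w - u) (u - v (f u))
      simpa using this
    have h4 := hf u hu
    linarith
  have h5 : N t₀ (w - v (f u)) ≤ δ * N t₀ w + N t₀ ((1-δ) • w - v (f u)) := by
    have h6 : N t₀ (w - v (f u)) ≤ N t₀ (δ • w) + N t₀ ((1-δ) • w - v (f u)) := by
      have := hNsub t₀ (δ • w) ((1-δ) • w - v (f u))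
      have heq : δ • w + ((1-δ) • w - v (f u)) = w - v (f u) := by
        have : δ + (1-δ) = 1 := by ring
        rw [← add_sub_assoc, ← add_smul, this, one_smul]
      rwa [heq] at this
    rw [hNsmul, abs_of_nonneg hδpos.le] at h6
    exact h6
  have h7 : N t (w - v (f u)) ≤ (1 + δ) * N t₀ (w - v (f u)) := (h1 _).2.1
  have hεδ : 4 * δ ≤ ε := by linarith
  have hB : δ * N t₀ w ≤ 2*R*δ := by nlinarith
  have hx : N t₀ (w - v (f u)) < 2*R*δ + δ := by linarith
  have hC : N t (w - v (f u)) < (1+δ)*(2*R*δ+δ) :=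
    h7.trans_lt (mul_lt_mul_of_pos_left hx (by linarith))
  have hmain : (1+δ)*(2*R*δ+δ) ≤ (R+2)*ε := by
    nlinarith [mul_pos hR hδpos, mul_le_mul_of_nonneg_left hδhalf (mul_pos hR hδpos).le,
      mul_le_mul_of_nonneg_left hδhalf hδpos.le,
      mul_le_mul_of_nonneg_left hεδ (by linarith : (0:ℝ) ≤ R + 2)]
  linarith
end
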